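/- arXiv:1901.00892 — 9 statements merged into one kernel-verified Lean document; each statement's English description precedes it below -/
import Mathlib

section
/- Let k be a field with char k ≠ 2 and l ≥ 2. For every matrix g ∈ GL(2l,k) satisfying ᵀg·β·g = μ·β for some μ ∈ kˣ (i.e., g lies in the symplectic similitude group GSp(2l,k) with similitude factor μ), there exists a matrix E in the subgroup of GL(2l,k) generated by the elementary symplectic matrices such that g = E · diag(1,…,1,μ,…,μ), where the diagonal matrix has its first l diagonal entries equal to 1 and its last l diagonal entries equal to μ. -/
open Matrix

/-- The elementary symplectic matrices of size `2l`, with rows and columns indexed by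
`Fin l ⊕ Fin l` (the first summand plays the role of the indices `1, …, l` and the
second summand the role of `-1, …, -l`). -/
def sympElem (k : Type*) [Field k] (l : ℕ) :
    Set (Matrix (Fin l ⊕ Fin l) (Fin l ⊕ Fin l) k) :=
  {M | ∃ t : k,
    (∃ i j : Fin l, i ≠ j ∧
      M = 1 + (Matrix.single (Sum.inl i) (Sum.inl j) t
              - Matrix.single (Sum.inr j) (Sum.inr i) t)) ∨
    (∃ i j : Fin l, i < j ∧
      M = 1 + (Matrix.single (Sum.inl i) (Sum.inr j) t
              + Matrix.single (Sum.inl j) (Sum.inr i) t)) ∨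
    (∃ i j : Fin l, i < j ∧
      M = 1 + (Matrix.single (Sum.inr i) (Sum.inl j) t
              + Matrix.single (Sum.inr j) (Sum.inl i) t)) ∨
    (∃ i : Fin l, M = 1 + Matrix.single (Sum.inl i) (Sum.inr i) t) ∨
    (∃ i : Fin l, M = 1 + Matrix.single (Sum.inr i) (Sum.inl i) t)}

/-!
Multiplying `g` on the right by `diag(1, …, 1, μ⁻¹, …, μ⁻¹)` makes it symplectic, so it suffices
to show that every symplectic `M = [[A, B], [C, D]]` is a product of elementary symplectic
matrices. Since `ᵀA·C` is symmetric and `[A; C]` has full column rank, some symmetric `X` makes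
`A + X·C` invertible; then `[[1, X], [0, 1]]·M` lies in the big cell and factors as
`[[1, 0], [W, 1]]·diag(A', ᵀA'⁻¹)·[[1, T], [0, 1]]` with `W`, `T` symmetric. Unipotent factors
with symmetric blocks are products of the generators `x_{±i,∓j}` and `x_{±i,∓i}`. For the Levi
factor, write `A'` as a product of transvections (giving the generators `x_{i,j}`) and diagonal
matrices, and obtain each `diag(…, a, …)` inside the copy of `SL₂` on the coordinates `i, -i`.
-/

section SymmetricDecomposition
variable {n R : Type*} [Fintype n] [LinearOrder n] [AddCommMonoid R]

theorem Matrix.IsSymm.mem_addSubmonoid_of_single {S : Matrix n n R} (hS : S.IsSymm)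
    {T : AddSubmonoid (Matrix n n R)}
    (hoff : ∀ i j, i < j → ∀ t, single i j t + single j i t ∈ T)
    (hdiag : ∀ i t, single i i t ∈ T) : S ∈ T := by
  set N : Matrix n n R := of fun i j => if i < j then S i j else 0
  have hN : S = N + Nᵀ + diagonal S.diag := by
    ext i j
    rcases lt_trichotomy i j with h | rfl | h
    · simp [N, h, h.not_gt, h.ne]
    · simp [N]
    · simp [N, h, h.not_gt, h.ne', hS.apply]
  have hpair : N + Nᵀ = ∑ i, ∑ j, (single i j (N i j) + single j i (N i j)) := by
    conv_lhs => rw [matrix_eq_sum_single N]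
    simp only [transpose_sum, transpose_single, Finset.sum_add_distrib]
  rw [hN, hpair, ← sum_single_eq_diagonal]
  refine add_mem (sum_mem fun i _ => sum_mem fun j _ => ?_) (sum_mem fun i _ => hdiag i _)
  by_cases h : i < j
  · exact hoff i j h _
  · simp [N, h]

theorem Matrix.IsSymm.map_mem_of_single {M : Type*} [Monoid M] {H : Submonoid M}
    (f : Matrix n n R → M) (hf_zero : f 0 = 1) (hf_add : ∀ a b, f (a + b) = f a * f b)
    (hoff : ∀ i j, i < j → ∀ t, f (single i j t + single j i t) ∈ H)
    (hdiag : ∀ i t, f (single i i t) ∈ H) {S : Matrix n n R} (hS : S.IsSymm) : f S ∈ H :=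
  hS.mem_addSubmonoid_of_single (T := ⟨⟨{B | f B ∈ H}, fun ha hb => by
    simpa [hf_add] using mul_mem ha hb⟩, hf_zero ▸ one_mem H⟩) hoff hdiag

end SymmetricDecomposition

section Transversal
variable {n k : Type*} [Fintype n] [DecidableEq n] [Field k]

theorem exists_isSymm_isUnit_diagonal_add_mul {δ : n → k} {C : Matrix n n k}
    (hsymm : (diagonal δ)ᵀ * C = Cᵀ * diagonal δ)
    (hker : ∀ x, diagonal δ *ᵥ x = 0 → C *ᵥ x = 0 → x = 0) :
    ∃ X : Matrix n n k, X.IsSymm ∧ IsUnit (diagonal δ + X * C) := by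
  classical
  -- `X` is the coordinate projection onto the kernel of `diagonal δ`.
  refine ⟨diagonal fun i => if δ i = 0 then 1 else 0, isSymm_diagonal _, ?_⟩
  rw [isUnit_iff_isUnit_det, isUnit_iff_ne_zero, Ne, ← exists_mulVec_eq_zero_iff]
  rintro ⟨z, hz_ne, hz⟩
  have hrow : ∀ i, δ i * z i + (if δ i = 0 then 1 else 0) * (C *ᵥ z) i = 0 := fun i => by
    simpa [add_mulVec, ← mulVec_mulVec, mulVec_diagonal] using congrFun hz i
  have hz_supp : ∀ i, δ i ≠ 0 → z i = 0 := fun i hi => by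
    simpa [hi] using hrow i
  have hC_zero : ∀ i j, δ i ≠ 0 → δ j = 0 → C i j = 0 := fun i j hi hj => by
    simpa [diagonal_mul, mul_diagonal, hj, hi] using congrFun (congrFun hsymm i) j
  refine hz_ne (hker z ?_ ?_)
  · ext i
    by_cases hi : δ i = 0 <;> simp [mulVec_diagonal, hi, hz_supp]
  · ext i
    by_cases hi : δ i = 0
    · simpa [hi] using hrow i
    · refine Finset.sum_eq_zero fun j _ => ?_
      by_cases hj : δ j = 0
      · simp [hC_zero i j hi hj]
      · simp [hz_supp j hj]

theorem exists_isSymm_isUnit_add_mul {A C : Matrix n n k} (hsymm : Aᵀ * C = Cᵀ * A)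
    (hker : ∀ x, A *ᵥ x = 0 → C *ᵥ x = 0 → x = 0) :
    ∃ X : Matrix n n k, X.IsSymm ∧ IsUnit (A + X * C) := by
  -- With `A = P·Δ·Q`, the pair `(A, C)` becomes `(Δ, ᵀP·C·Q⁻¹)` and `X = P·Y·ᵀP`.
  obtain ⟨L, L', δ, hA⟩ := Pivot.exists_list_transvec_mul_diagonal_mul_list_transvec A
  set P := (L.map TransvectionStruct.toMatrix).prod
  set Q := (L'.map TransvectionStruct.toMatrix).prod
  have hP : IsUnit P.det := by simp [P, TransvectionStruct.det_toMatrix_prod]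
  have hQ : IsUnit Q.det := by simp [Q, TransvectionStruct.det_toMatrix_prod]
  have hPT : Pᵀ * (P⁻¹)ᵀ = 1 := by rw [← transpose_mul, nonsing_inv_mul P hP, transpose_one]
  have hPT' : (P⁻¹)ᵀ * Pᵀ = 1 := by rw [← transpose_mul, mul_nonsing_inv P hP, transpose_one]
  set C' := Pᵀ * C * Q⁻¹
  have hC : C = (P⁻¹)ᵀ * C' * Q := by
    simp only [C', Matrix.mul_assoc, nonsing_inv_mul Q hQ, Matrix.mul_one,
      ← Matrix.mul_assoc _ Pᵀ, hPT', Matrix.one_mul]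
  have hΔ : diagonal δ = P⁻¹ * A * Q⁻¹ := by
    simp only [hA, Matrix.mul_assoc, mul_nonsing_inv Q hQ, Matrix.mul_one,
      nonsing_inv_mul_cancel_left P _ hP]
  have hsymm' : (diagonal δ)ᵀ * C' = C'ᵀ * diagonal δ := by
    simp only [hΔ, C', transpose_mul, transpose_transpose, Matrix.mul_assoc,
      mul_nonsing_inv_cancel_left P _ hP]
    rw [← Matrix.mul_assoc _ Pᵀ, hPT', Matrix.one_mul, ← Matrix.mul_assoc Aᵀ, hsymm,
      Matrix.mul_assoc]
  have hker' : ∀ x, diagonal δ *ᵥ x = 0 → C' *ᵥ x = 0 → x = 0 := by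
    intro x hΔx hCx
    have hQx : Q *ᵥ Q⁻¹ *ᵥ x = x := by rw [mulVec_mulVec, mul_nonsing_inv Q hQ, one_mulVec]
    rw [← hQx, hker (Q⁻¹ *ᵥ x), mulVec_zero]
    · rw [hA, ← mulVec_mulVec, ← mulVec_mulVec, hQx, hΔx, mulVec_zero]
    · rw [hC, ← mulVec_mulVec, ← mulVec_mulVec, hQx, hCx, mulVec_zero]
  obtain ⟨Y, hY, hunit⟩ := exists_isSymm_isUnit_diagonal_add_mul hsymm' hker'
  refine ⟨P * Y * Pᵀ, ?_, ?_⟩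
  · simp [IsSymm, transpose_mul, hY.eq, Matrix.mul_assoc]
  · have hfactor : A + P * Y * Pᵀ * C = P * (diagonal δ + Y * C') * Q := by
      rw [hA, hC]
      simp only [Matrix.mul_add, Matrix.add_mul, Matrix.mul_assoc]
      rw [← Matrix.mul_assoc Pᵀ, hPT, Matrix.one_mul]
    rw [hfactor]
    exact ((P.isUnit_iff_isUnit_det.mpr hP).mul hunit).mul (Q.isUnit_iff_isUnit_det.mpr hQ)

end Transversal

section BlockDecomposition
variable {l k : Type*} [Fintype l] [DecidableEq l] [Field k]

theorem fromBlocks_one_symm_zero_one_mem_symplecticGroup {S : Matrix l l k} (hS : S.IsSymm) :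
    fromBlocks 1 S 0 1 ∈ symplecticGroup l k := by
  simp [SymplecticGroup.fromBlocks_mem_iff, hS.eq]

theorem exists_eq_lower_mul_levi_mul_upper {A B C D : Matrix l l k}
    (hM : fromBlocks A B C D ∈ symplecticGroup l k) (hA : IsUnit A.det) :
    ∃ W T : Matrix l l k, W.IsSymm ∧ T.IsSymm ∧
      fromBlocks A B C D = fromBlocks 1 0 W 1 * fromBlocks A 0 0 (A⁻¹)ᵀ * fromBlocks 1 T 0 1 := by
  obtain ⟨hAC, -, hAD⟩ := SymplecticGroup.fromBlocks_mem_iff.mp hM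
  obtain ⟨hAB, -, -⟩ := SymplecticGroup.fromBlocks_mem_iff.mp
    (by simpa [fromBlocks_transpose] using SymplecticGroup.transpose_mem hM)
  rw [transpose_transpose, transpose_transpose] at hAB
  have hAT : IsUnit Aᵀ.det := by rwa [det_transpose]
  have hW : (C * A⁻¹).IsSymm :=
    calc (C * A⁻¹)ᵀ = (Aᵀ)⁻¹ * Cᵀ := by rw [transpose_mul, transpose_nonsing_inv]
      _ = (Aᵀ)⁻¹ * (Cᵀ * A * A⁻¹) := by rw [mul_nonsing_inv_cancel_right _ _ hA]
      _ = (Aᵀ)⁻¹ * (Aᵀ * C * A⁻¹) := by rw [hAC]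
      _ = C * A⁻¹ := by rw [Matrix.mul_assoc, nonsing_inv_mul_cancel_left _ _ hAT]
  have hT : (A⁻¹ * B).IsSymm :=
    calc (A⁻¹ * B)ᵀ = Bᵀ * (Aᵀ)⁻¹ := by rw [transpose_mul, transpose_nonsing_inv]
      _ = A⁻¹ * (A * Bᵀ) * (Aᵀ)⁻¹ := by rw [nonsing_inv_mul_cancel_left _ _ hA]
      _ = A⁻¹ * (B * Aᵀ) * (Aᵀ)⁻¹ := by rw [hAB]
      _ = A⁻¹ * B := by rw [← Matrix.mul_assoc, mul_nonsing_inv_cancel_right _ _ hAT]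
  have hD : D = C * A⁻¹ * B + (A⁻¹)ᵀ :=
    calc D = (Aᵀ)⁻¹ * (Aᵀ * D) := (nonsing_inv_mul_cancel_left _ _ hAT).symm
      _ = (Aᵀ)⁻¹ * (1 + Cᵀ * B) := by rw [← hAD, sub_add_cancel]
      _ = (C * A⁻¹)ᵀ * B + (A⁻¹)ᵀ := by
        rw [Matrix.mul_add, Matrix.mul_one, transpose_mul, transpose_nonsing_inv,
          Matrix.mul_assoc, add_comm]
      _ = C * A⁻¹ * B + (A⁻¹)ᵀ := by rw [hW.eq]
  refine ⟨C * A⁻¹, A⁻¹ * B, hW, hT, ?_⟩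
  simp [fromBlocks_multiply, hD, mul_nonsing_inv_cancel_left _ _ hA,
    nonsing_inv_mul_cancel_right _ _ hA, Matrix.mul_assoc]

end BlockDecomposition

section Similitude
variable {l R : Type*} [Fintype l] [DecidableEq l] [CommRing R]

theorem diagonal_transpose_mul_J_mul_diagonal (c : R) :
    (diagonal (Sum.elim (fun _ : l => 1) fun _ => c))ᵀ * J l R *
      diagonal (Sum.elim (fun _ => 1) fun _ => c) = c • J l R := by
  rw [← fromBlocks_diagonal, J]
  simp [fromBlocks_transpose, fromBlocks_multiply, fromBlocks_smul, smul_one_eq_diagonal]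

theorem mul_diagonal_mem_symplecticGroup {M : Matrix (l ⊕ l) (l ⊕ l) R} {c : Rˣ}
    (hM : Mᵀ * J l R * M = (c : R) • J l R) :
    M * diagonal (Sum.elim (fun _ => 1) fun _ => ((c⁻¹ : Rˣ) : R)) ∈ symplecticGroup l R := by
  set D := diagonal (Sum.elim (fun _ : l => (1 : R)) fun _ : l => ((c⁻¹ : Rˣ) : R))
  rw [SymplecticGroup.mem_iff']
  calc (M * D)ᵀ * J l R * (M * D) = Dᵀ * (Mᵀ * J l R * M) * D := by
        simp only [transpose_mul, Matrix.mul_assoc]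
    _ = J l R := by
      rw [hM, Matrix.mul_smul, Matrix.smul_mul, diagonal_transpose_mul_J_mul_diagonal, smul_smul,
        Units.mul_inv, one_smul]

end Similitude

section Elementary
variable {k : Type*} [Field k] {l : ℕ}

local notation "𝓔" => Submonoid.closure (sympElem k l)

theorem fromBlocks_transvection_mem {i j : Fin l} (hij : i ≠ j) (t : k) :
    fromBlocks (transvection i j t) 0 0 ((transvection i j t)⁻¹)ᵀ ∈ 𝓔 := by
  have hinv : (transvection i j t)⁻¹ = transvection i j (-t) := inv_eq_right_inv <| by
    rw [transvection_mul_transvection_same _ _ hij, add_neg_cancel, transvection_zero]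
  rw [hinv]
  refine Submonoid.subset_closure ⟨t, Or.inl ⟨i, j, hij, ?_⟩⟩
  ext (a | a) (b | b) <;> simp [transvection, single_apply, one_apply, sub_eq_add_neg, neg_ite]

theorem fromBlocks_one_single_add_single_zero_one_mem {i j : Fin l} (hij : i < j) (t : k) :
    fromBlocks 1 (single i j t + single j i t) 0 1 ∈ 𝓔 := by
  refine Submonoid.subset_closure ⟨t, .inr <| .inl ⟨i, j, hij, ?_⟩⟩
  ext (a | a) (b | b) <;> simp [single_apply, one_apply]

theorem fromBlocks_one_zero_single_add_single_one_mem {i j : Fin l} (hij : i < j) (t : k) :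
    fromBlocks 1 0 (single i j t + single j i t) 1 ∈ 𝓔 := by
  refine Submonoid.subset_closure ⟨t, .inr <| .inr <| .inl ⟨i, j, hij, ?_⟩⟩
  ext (a | a) (b | b) <;> simp [single_apply, one_apply]

theorem fromBlocks_one_single_zero_one_mem (i : Fin l) (t : k) :
    fromBlocks 1 (single i i t) 0 1 ∈ 𝓔 := by
  refine Submonoid.subset_closure ⟨t, .inr <| .inr <| .inr <| .inl ⟨i, ?_⟩⟩
  ext (a | a) (b | b) <;> simp [single_apply, one_apply]

theorem fromBlocks_one_zero_single_one_mem (i : Fin l) (t : k) :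
    fromBlocks 1 0 (single i i t) 1 ∈ 𝓔 := by
  refine Submonoid.subset_closure ⟨t, .inr <| .inr <| .inr <| .inr ⟨i, ?_⟩⟩
  ext (a | a) (b | b) <;> simp [single_apply, one_apply]

theorem fromBlocks_one_symm_zero_one_mem {S : Matrix (Fin l) (Fin l) k} (hS : S.IsSymm) :
    fromBlocks 1 S 0 1 ∈ 𝓔 :=
  hS.map_mem_of_single (fun S => fromBlocks 1 S 0 1) fromBlocks_one
    (fun a b => by simp [fromBlocks_multiply, add_comm])
    (fun _ _ hij => fromBlocks_one_single_add_single_zero_one_mem hij)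
    fromBlocks_one_single_zero_one_mem

theorem fromBlocks_one_zero_symm_one_mem {S : Matrix (Fin l) (Fin l) k} (hS : S.IsSymm) :
    fromBlocks 1 0 S 1 ∈ 𝓔 :=
  hS.map_mem_of_single (fun S => fromBlocks 1 0 S 1) fromBlocks_one
    (fun a b => by simp [fromBlocks_multiply, add_comm])
    (fun _ _ hij => fromBlocks_one_zero_single_add_single_one_mem hij)
    fromBlocks_one_zero_single_one_mem

theorem fromBlocks_mul_inv_transpose_mem {A B : Matrix (Fin l) (Fin l) k}
    (hA : fromBlocks A 0 0 (A⁻¹)ᵀ ∈ 𝓔) (hB : fromBlocks B 0 0 (B⁻¹)ᵀ ∈ 𝓔) :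
    fromBlocks (A * B) 0 0 ((A * B)⁻¹)ᵀ ∈ 𝓔 := by
  have hfactor : fromBlocks (A * B) 0 0 ((A * B)⁻¹)ᵀ =
      fromBlocks A 0 0 (A⁻¹)ᵀ * fromBlocks B 0 0 (B⁻¹)ᵀ := by
    simp [fromBlocks_multiply, Matrix.mul_inv_rev, transpose_mul]
  exact hfactor ▸ mul_mem hA hB

theorem fromBlocks_diagonal_mulSingle_mem (i : Fin l) {a : k} (ha : a ≠ 0) :
    fromBlocks (diagonal (Pi.mulSingle i a)) 0 0 ((diagonal (Pi.mulSingle i a))⁻¹)ᵀ ∈ 𝓔 := by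
  set x : k → Matrix (Fin l ⊕ Fin l) (Fin l ⊕ Fin l) k := fun t => fromBlocks 1 (single i i t) 0 1
  set y : k → Matrix (Fin l ⊕ Fin l) (Fin l ⊕ Fin l) k := fun t => fromBlocks 1 0 (single i i t) 1
  have hinv : (diagonal (Pi.mulSingle i a))⁻¹ = diagonal (Pi.mulSingle i a⁻¹) :=
    inv_eq_right_inv <| by
      rw [diagonal_mul_diagonal, ← Pi.mul_def, ← Pi.mulSingle_mul, mul_inv_cancel₀ ha,
        Pi.mulSingle_one]
      exact diagonal_one
  -- On the coordinates `i, -i`, `x a * y (-a⁻¹) * x a = [[0, a], [-a⁻¹, 0]]`, and the product of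
  -- this with its value at `a = -1` is `diag(a, a⁻¹)`.
  have hsix : fromBlocks (diagonal (Pi.mulSingle i a)) 0 0 (diagonal (Pi.mulSingle i a⁻¹)) =
      x a * y (-a⁻¹) * x a * (x (-1) * y 1 * x (-1)) := by
    simp only [x, y, fromBlocks_multiply, Matrix.mul_add, Matrix.add_mul, Matrix.mul_one,
      Matrix.one_mul, single_mul_single_same, Matrix.mul_zero, add_zero, zero_add, fromBlocks_inj]
    refine ⟨?_, ?_, ?_, ?_⟩ <;> ext b c <;>
      by_cases hb : b = i <;> by_cases hc : c = i <;>
      simp_all [one_apply, diagonal_apply, eq_comm (a := i)]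
  have hx := fromBlocks_one_single_zero_one_mem (k := k) i
  have hy := fromBlocks_one_zero_single_one_mem (k := k) i
  rw [hinv, diagonal_transpose, hsix]
  exact mul_mem (mul_mem (mul_mem (hx a) (hy _)) (hx a)) (mul_mem (mul_mem (hx _) (hy 1)) (hx _))

theorem fromBlocks_inv_transpose_mem {A : Matrix (Fin l) (Fin l) k} (hA : A.det ≠ 0) :
    fromBlocks A 0 0 (A⁻¹)ᵀ ∈ 𝓔 := by
  refine diagonal_transvection_induction_of_det_ne_zero
    (fun A => fromBlocks A 0 0 (A⁻¹)ᵀ ∈ 𝓔) A hA (fun D hD => ?_)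
    (fun t => fromBlocks_transvection_mem t.hij t.c)
    (fun _ _ _ _ => fromBlocks_mul_inv_transpose_mem)
  have hD_ne : ∀ i, D i ≠ 0 := by simpa [det_diagonal, Finset.prod_ne_zero_iff] using hD
  rw [← Finset.univ_prod_mulSingle D]
  refine Finset.prod_induction _ (fun δ => fromBlocks (diagonal δ) 0 0 ((diagonal δ)⁻¹)ᵀ ∈ 𝓔)
    (fun a b ha hb => ?_) (by simp) (fun i _ => fromBlocks_diagonal_mulSingle_mem i (hD_ne i))
  rw [Pi.mul_def, ← diagonal_mul_diagonal]
  exact fromBlocks_mul_inv_transpose_mem ha hb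

theorem mem_closure_sympElem_of_mem_symplecticGroup
    {M : Matrix (Fin l ⊕ Fin l) (Fin l ⊕ Fin l) k} (hM : M ∈ symplecticGroup (Fin l) k) :
    M ∈ 𝓔 := by
  obtain ⟨A, B, C, D, rfl⟩ : ∃ A B C D, M = fromBlocks A B C D :=
    ⟨_, _, _, _, (fromBlocks_toBlocks M).symm⟩
  have hker : ∀ x, A *ᵥ x = 0 → C *ᵥ x = 0 → x = 0 := by
    intro x hAx hCx
    have hinj := mulVec_injective_iff_isUnit.mpr
      ((isUnit_iff_isUnit_det _).mpr (SymplecticGroup.symplectic_det hM))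
    have hx := @hinj (Sum.elim x 0) 0 (by simp [fromBlocks_mulVec, hAx, hCx])
    simpa using congrArg (· ∘ Sum.inl) hx
  obtain ⟨X, hX, hunit⟩ :=
    exists_isSymm_isUnit_add_mul (SymplecticGroup.fromBlocks_mem_iff.mp hM).1 hker
  have hXM : fromBlocks 1 X 0 1 * fromBlocks A B C D =
      fromBlocks (A + X * C) (B + X * D) C D := by
    simp [fromBlocks_multiply]
  have hdet := (isUnit_iff_isUnit_det _).mp hunit
  obtain ⟨W, T, hW, hT, hdecomp⟩ := exists_eq_lower_mul_levi_mul_upper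
    (hXM ▸ mul_mem (fromBlocks_one_symm_zero_one_mem_symplecticGroup hX) hM) hdet
  have hsplit : fromBlocks A B C D =
      fromBlocks 1 (-X) 0 1 * (fromBlocks 1 X 0 1 * fromBlocks A B C D) := by
    rw [← Matrix.mul_assoc, fromBlocks_multiply]
    simp
  rw [hsplit, hXM, hdecomp]
  exact mul_mem (fromBlocks_one_symm_zero_one_mem hX.neg) <| mul_mem (mul_mem
    (fromBlocks_one_zero_symm_one_mem hW) (fromBlocks_inv_transpose_mem hdet.ne_zero))
    (fromBlocks_one_symm_zero_one_mem hT)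

end Elementary

theorem GSp_gaussian_elimination_general (k : Type*) [Field k] (l : ℕ)
    (g : Matrix (Fin l ⊕ Fin l) (Fin l ⊕ Fin l) k) (μ : kˣ)
    (hsim : gᵀ * (Matrix.fromBlocks 0 1 (-1) 0 :
        Matrix (Fin l ⊕ Fin l) (Fin l ⊕ Fin l) k) * g
      = (μ : k) • (Matrix.fromBlocks 0 1 (-1) 0 :
        Matrix (Fin l ⊕ Fin l) (Fin l ⊕ Fin l) k)) :
    ∃ E ∈ Submonoid.closure (sympElem k l),
      g = E * Matrix.diagonal (Sum.elim (fun _ => (1 : k)) (fun _ => (μ : k))) := by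
  have hβ : (fromBlocks 0 1 (-1) 0 : Matrix (Fin l ⊕ Fin l) (Fin l ⊕ Fin l) k) = -J (Fin l) k := by
    simp [J, fromBlocks_neg]
  rw [hβ, Matrix.mul_neg, Matrix.neg_mul, smul_neg, neg_inj] at hsim
  refine ⟨_, mem_closure_sympElem_of_mem_symplecticGroup
    (mul_diagonal_mem_symplecticGroup hsim), ?_⟩
  have hdiag : (fun i => Sum.elim (fun _ => 1) (fun _ => ((μ⁻¹ : kˣ) : k)) i *
      Sum.elim (fun _ => 1) (fun _ => (μ : k)) i) = fun _ : Fin l ⊕ Fin l => 1 := by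
    funext i; cases i <;> simp
  rw [Matrix.mul_assoc, diagonal_mul_diagonal, hdiag, diagonal_one, Matrix.mul_one]

/-- Gaussian elimination in the symplectic similitude group `GSp(2l, k)`:
every `g` with `ᵀg·β·g = μ·β` is a product of elementary symplectic matrices and the
diagonal matrix `diag(1, …, 1, μ, …, μ)`. -/
theorem GSp_gaussian_elimination (k : Type*) [Field k] (hchar : ringChar k ≠ 2)
    (l : ℕ) (hl : 2 ≤ l)
    (g : Matrix (Fin l ⊕ Fin l) (Fin l ⊕ Fin l) k) (hg : IsUnit g.det) (μ : kˣ)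
    (hsim : gᵀ * (Matrix.fromBlocks 0 1 (-1) 0 :
        Matrix (Fin l ⊕ Fin l) (Fin l ⊕ Fin l) k) * g
      = (μ : k) • (Matrix.fromBlocks 0 1 (-1) 0 :
        Matrix (Fin l ⊕ Fin l) (Fin l ⊕ Fin l) k)) :
    ∃ E ∈ Submonoid.closure (sympElem k l),
      g = E * Matrix.diagonal (Sum.elim (fun _ => (1 : k)) (fun _ => (μ : k))) :=
  GSp_gaussian_elimination_general k l g μ hsim
end

section
/- Let k be a field with char k ≠ 2 and l ≥ 2. For every matrix g ∈ GL(2l,k) satisfying ᵀg·β·g = β (i.e., g lies in the split orthogonal group O(2l,k)), there exist λ ∈ kˣ and a matrix E in the subgroup of GL(2l,k) generated by the elementary split orthogonal matrices such that g = E · diag(1,…,1,λ,1,…,1,λ⁻¹), where the diagonal matrix has diagonal entries 1,…,1,λ in the first l positions and 1,…,1,λ⁻¹ in the last l positions. -/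
open Matrix

/-- The elementary split orthogonal matrices of size `2l`, with rows and columns indexed by
`Fin l ⊕ Fin l` (the first summand plays the role of the indices `1, …, l` and the
second summand the role of `-1, …, -l`); the last constructor is the element `w_l`. -/
def orthoElem (k : Type*) [Field k] (l : ℕ) :
    Set (Matrix (Fin l ⊕ Fin l) (Fin l ⊕ Fin l) k) :=
  {M | (∃ t : k,
    (∃ i j : Fin l, i ≠ j ∧
      M = 1 + (single (Sum.inl i) (Sum.inl j) t
              - single (Sum.inr j) (Sum.inr i) t)) ∨
    (∃ i j : Fin l, i < j ∧
      M = 1 + (single (Sum.inl i) (Sum.inr j) t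
              - single (Sum.inl j) (Sum.inr i) t)) ∨
    (∃ i j : Fin l, i < j ∧
      M = 1 + (single (Sum.inr i) (Sum.inl j) t
              - single (Sum.inr j) (Sum.inl i) t))) ∨
   (∃ i : Fin l, (i : ℕ) + 1 = l ∧
      M = 1 - single (Sum.inl i) (Sum.inl i) (1 : k)
            - single (Sum.inr i) (Sum.inr i) (1 : k)
            - single (Sum.inl i) (Sum.inr i) (1 : k)
            - single (Sum.inr i) (Sum.inl i) (1 : k))}

/-!
Column reduction, one level at a time. Let `B(u, v) = ᵀu β v`, so that `g` is orthogonal iff it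
preserves `B`. If an orthogonal `g` fixes the basis vectors `e_{±j}` for `j < i`, then
`(g v)_{±j} = B(e_{∓j}, g v) = B(e_{∓j}, v) = v_{±j}`, so the columns `g e_{±i}` vanish below level
`i`. The column `g e_i` is nonzero and isotropic: one or two transvections make its `e_i`-coordinate
nonzero, the transvections `x_{y,i}(t)` clear every coordinate of higher level, and then
`B(v, v) = 2 v_i v_{-i} = 0` with `char k ≠ 2` kills its `e_{-i}`-coordinate. Three transvections
between levels `i` and `i + 1` normalise the remaining scalar to `1`. Afterwards the column
`g e_{-i}` has `e_{-i}`-coordinate `B(e_i, g e_{-i}) = 1` and is cleared in the same way by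
transvections that fix `e_i`. At the last level there is no further level to normalise with, so a
scalar `λ` survives, moved into the `e_l`-coordinate by `w_l` if necessary.
-/

namespace SplitOrthogonal

variable {k : Type*} [Field k] {l : ℕ}

-- `Sum.swap` is the involution `i ↦ -i` of the index set.
local notation "ι" => Fin l ⊕ Fin l

local notation "𝓔" => Submonoid.closure (orthoElem k l)

def level : ι → ℕ := Sum.elim Fin.val Fin.val

@[simp] lemma level_inl (i : Fin l) : level (.inl i : ι) = i := rfl
@[simp] lemma level_inr (i : Fin l) : level (.inr i : ι) = i := rfl
@[simp] lemma level_swap (x : ι) : level x.swap = level x := by cases x <;> rfl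

lemma swap_ne_self (x : ι) : x.swap ≠ x := by cases x <;> simp

lemma eq_or_eq_swap_of_level_eq {x y : ι} (h : level x = level y) : x = y ∨ x = y.swap := by
  cases x <;> cases y <;> simp_all [Fin.ext_iff]

def IsOrtho (g : Matrix ι ι k) : Prop := gᵀ * fromBlocks 0 1 1 0 * g = fromBlocks 0 1 1 0

def splitForm (u v : ι → k) : k := u ⬝ᵥ (v ∘ Sum.swap)

lemma fromBlocks_mulVec_eq_comp_swap (v : ι → k) :
    (fromBlocks 0 1 1 0 : Matrix ι ι k) *ᵥ v = v ∘ Sum.swap := by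
  ext (i | i) <;> simp [fromBlocks_mulVec]

lemma IsOrtho.splitForm_mulVec {g : Matrix ι ι k} (hg : IsOrtho g) (u v : ι → k) :
    splitForm (g *ᵥ u) (g *ᵥ v) = splitForm u v := by
  calc splitForm (g *ᵥ u) (g *ᵥ v)
      = (g *ᵥ u) ⬝ᵥ (fromBlocks 0 1 1 0 *ᵥ (g *ᵥ v)) := by
        rw [splitForm, fromBlocks_mulVec_eq_comp_swap]
    _ = u ⬝ᵥ ((gᵀ * fromBlocks 0 1 1 0 * g) *ᵥ v) := by
        rw [mulVec_mulVec, dotProduct_mulVec, ← vecMul_transpose, vecMul_vecMul,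
          ← dotProduct_mulVec, Matrix.mul_assoc]
    _ = splitForm u v := by rw [hg, fromBlocks_mulVec_eq_comp_swap, splitForm]

lemma splitForm_single (z : ι) (c : k) (v : ι → k) :
    splitForm (Pi.single z c) v = c * v z.swap :=
  single_dotProduct _ c z

lemma splitForm_self_eq_of_support {v : ι → k} {π : ι}
    (hv : ∀ x, x ≠ π → x ≠ π.swap → v x = 0) : splitForm v v = 2 * (v π * v π.swap) := by
  rw [splitForm, dotProduct, ← Finset.sum_subset (Finset.subset_univ {π, π.swap}),
    Finset.sum_pair (swap_ne_self π).symm]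
  · simp only [Function.comp_apply, Sum.swap_swap]
    ring
  · intro x _ hx
    simp only [Finset.mem_insert, Finset.mem_singleton, not_or] at hx
    rw [hv x hx.1 hx.2, zero_mul]

lemma eq_single_of_isotropic (h2 : (2 : k) ≠ 0) {v : ι → k} {π : ι}
    (hv : ∀ x, x ≠ π → x ≠ π.swap → v x = 0) (hπ : v π ≠ 0) (hiso : splitForm v v = 0) :
    v = Pi.single π (v π) := by
  have hswap : v π.swap = 0 := by
    rw [splitForm_self_eq_of_support hv] at hiso
    simpa [h2, hπ] using hiso
  ext x
  rcases eq_or_ne x π with rfl | hxπ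
  · simp
  rw [Pi.single_eq_of_ne hxπ]
  rcases eq_or_ne x π.swap with rfl | hxπ'
  · exact hswap
  · exact hv x hxπ hxπ'

lemma isOrtho_one : IsOrtho (1 : Matrix ι ι k) := by
  simp [IsOrtho]

lemma IsOrtho.mul {g h : Matrix ι ι k} (hg : IsOrtho g) (hh : IsOrtho h) : IsOrtho (g * h) := by
  rw [IsOrtho, transpose_mul, show hᵀ * gᵀ * fromBlocks 0 1 1 0 * (g * h)
    = hᵀ * (gᵀ * fromBlocks 0 1 1 0 * g) * h by noncomm_ring, hg, hh]

lemma IsOrtho.mulVec_apply_of_mulVec_single {g : Matrix ι ι k} (hg : IsOrtho g) {x : ι}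
    (hx : g *ᵥ Pi.single x.swap 1 = Pi.single x.swap 1) (v : ι → k) : (g *ᵥ v) x = v x := by
  simpa [splitForm_single, hx] using hg.splitForm_mulVec (Pi.single x.swap 1) v

lemma IsOrtho.mulVec_ne_zero {g : Matrix ι ι k} (hg : IsOrtho g) {v : ι → k} (hv : v ≠ 0) :
    g *ᵥ v ≠ 0 := by
  intro h0
  refine hv (funext fun x => ?_)
  simpa [splitForm_single, h0, splitForm] using
    (hg.splitForm_mulVec (Pi.single x.swap 1) v).symm

lemma IsOrtho.splitForm_mulVec_single_self {g : Matrix ι ι k} (hg : IsOrtho g) (y : ι) :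
    splitForm (g *ᵥ Pi.single y 1) (g *ᵥ Pi.single y 1) = 0 := by
  rw [hg.splitForm_mulVec, splitForm_single, Pi.single_eq_of_ne (swap_ne_self y), mul_zero]

-- the paper's `x_{a,b}(t)`
def elemOrth (a b : ι) (t : k) : Matrix ι ι k := 1 + (single a b t - single b.swap a.swap t)

def wElem (i : Fin l) : Matrix ι ι k :=
  1 - single (.inl i) (.inl i) 1 - single (.inr i) (.inr i) 1
    - single (.inl i) (.inr i) 1 - single (.inr i) (.inl i) 1

lemma elemOrth_mulVec (a b : ι) (t : k) (v : ι → k) :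
    elemOrth a b t *ᵥ v = v + Pi.single a (t * v b) - Pi.single b.swap (t * v a.swap) := by
  simp only [elemOrth, add_mulVec, sub_mulVec, one_mulVec, single_mulVec, add_sub_assoc]
  rfl

lemma elemOrth_mulVec_single_one {a b x : ι} (hb : x ≠ b) (ha : x ≠ a.swap) (t : k) :
    elemOrth a b t *ᵥ Pi.single x 1 = Pi.single x 1 := by
  rw [elemOrth_mulVec, Pi.single_eq_of_ne hb.symm, Pi.single_eq_of_ne ha.symm]
  simp

lemma elemOrth_swap (a b : ι) (t : k) : elemOrth b.swap a.swap (-t) = elemOrth a b t := by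
  simp only [elemOrth, Sum.swap_swap, ← single_neg]
  abel

lemma elemOrth_neg_mul {a b : ι} (hab : a ≠ b) (t : k) :
    elemOrth a b (-t) * elemOrth a b t = 1 := by
  have hb : b ≠ b.swap := (swap_ne_self b).symm
  have ha : a.swap ≠ a := swap_ne_self a
  have hab' : a.swap ≠ b.swap := fun h => hab (Sum.swap_leftInverse.injective h)
  simp only [elemOrth, add_mul, mul_add, sub_mul, mul_sub, one_mul, mul_one, ← single_neg,
    neg_mul, single_mul_single_of_ne _ _ _ _ hab.symm, single_mul_single_of_ne _ _ _ _ hb,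
    single_mul_single_of_ne _ _ _ _ ha, single_mul_single_of_ne _ _ _ _ hab']
  abel

lemma fromBlocks_mul_single (a b : ι) (t : k) :
    fromBlocks 0 1 1 0 * single a b t = single a.swap b t := by
  ext (r | r) c <;> rcases a with a | a <;>
    simp [fromBlocks, mul_apply, single_apply, Sum.swap, one_apply, eq_comm, ite_and] <;>
    split_ifs <;> rfl

lemma single_mul_fromBlocks (a b : ι) (t : k) :
    single a b t * fromBlocks 0 1 1 0 = single a b.swap t := by
  ext r (c | c) <;> rcases b with b | b <;>
    simp [fromBlocks, mul_apply, single_apply, Sum.swap, one_apply, ite_and]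

lemma isOrtho_elemOrth {a b : ι} (hab : a ≠ b) (t : k) : IsOrtho (elemOrth a b t) := by
  have ha : a.swap ≠ a := swap_ne_self a
  have hb : b ≠ b.swap := (swap_ne_self b).symm
  have hab' : a.swap ≠ b.swap := fun h => hab (Sum.swap_leftInverse.injective h)
  simp only [IsOrtho, elemOrth, transpose_add, transpose_one, transpose_sub, transpose_single,
    add_mul, mul_add, sub_mul, mul_sub, one_mul, mul_one, fromBlocks_mul_single,
    single_mul_fromBlocks, Sum.swap_swap,
    single_mul_single_of_ne _ _ _ _ ha, single_mul_single_of_ne _ _ _ _ hb,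
    single_mul_single_of_ne _ _ _ _ hab.symm, single_mul_single_of_ne _ _ _ _ hab']
  abel

lemma isOrtho_wElem (i : Fin l) : IsOrtho (wElem i : Matrix ι ι k) := by
  have h : (.inl i : ι) ≠ .inr i := Sum.inl_ne_inr
  simp only [IsOrtho, wElem, transpose_sub, transpose_one, transpose_single,
    sub_mul, mul_sub, one_mul, mul_one, fromBlocks_mul_single,
    single_mul_fromBlocks, Sum.swap_inl, Sum.swap_inr, single_mul_single_same,
    single_mul_single_of_ne _ _ _ _ h, single_mul_single_of_ne _ _ _ _ h.symm, one_mul]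
  abel

lemma wElem_mul_self (i : Fin l) : (wElem i : Matrix ι ι k) * wElem i = 1 := by
  have h : (.inl i : ι) ≠ .inr i := Sum.inl_ne_inr
  simp only [wElem, sub_mul, mul_sub, one_mul, mul_one, single_mul_single_same,
    single_mul_single_of_ne _ _ _ _ h, single_mul_single_of_ne _ _ _ _ h.symm]
  abel

lemma wElem_mulVec_single_one {i : Fin l} {x : ι} (hx : level x ≠ i) :
    (wElem i : Matrix ι ι k) *ᵥ Pi.single x 1 = Pi.single x 1 := by
  have h1 : x ≠ .inl i := fun h => hx (h ▸ rfl)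
  have h2 : x ≠ .inr i := fun h => hx (h ▸ rfl)
  simp only [wElem, sub_mulVec, one_mulVec, single_mulVec, Pi.single_eq_of_ne h1.symm,
    Pi.single_eq_of_ne h2.symm, mul_zero]
  simp

lemma wElem_mulVec_apply_inl (i : Fin l) (v : ι → k) :
    (wElem i *ᵥ v) (.inl i) = -v (.inr i) := by
  simp [wElem, sub_mulVec, single_mulVec]

lemma elemOrth_mem_orthoElem {a b : ι} (h : level a ≠ level b) (t : k) :
    elemOrth a b t ∈ orthoElem k l := by
  rcases a with i | i <;> rcases b with j | j <;> simp only [level_inl, level_inr] at h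
  · exact Or.inl ⟨t, Or.inl ⟨i, j, fun e => h (congrArg _ e), rfl⟩⟩
  · rcases lt_or_gt_of_ne h with hij | hij
    · exact Or.inl ⟨t, Or.inr (Or.inl ⟨i, j, hij, rfl⟩)⟩
    · rw [← elemOrth_swap]
      exact Or.inl ⟨-t, Or.inr (Or.inl ⟨j, i, hij, rfl⟩)⟩
  · rcases lt_or_gt_of_ne h with hij | hij
    · exact Or.inl ⟨t, Or.inr (Or.inr ⟨i, j, hij, rfl⟩)⟩
    · rw [← elemOrth_swap]
      exact Or.inl ⟨-t, Or.inr (Or.inr ⟨j, i, hij, rfl⟩)⟩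
  · rw [← elemOrth_swap]
    exact Or.inl ⟨-t, Or.inl ⟨j, i, fun e => h (congrArg _ e.symm), rfl⟩⟩

lemma orthoElem_cases {M : Matrix ι ι k} (hM : M ∈ orthoElem k l) :
    (∃ a b : ι, ∃ t : k, level a ≠ level b ∧ M = elemOrth a b t) ∨ ∃ i : Fin l, M = wElem i := by
  rcases hM with ⟨t, ⟨i, j, hij, rfl⟩ | ⟨i, j, hij, rfl⟩ | ⟨i, j, hij, rfl⟩⟩ | ⟨i, -, rfl⟩
  · exact Or.inl ⟨.inl i, .inl j, t, Fin.val_ne_of_ne hij, rfl⟩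
  · exact Or.inl ⟨.inl i, .inr j, t, Fin.val_ne_of_ne hij.ne, rfl⟩
  · exact Or.inl ⟨.inr i, .inl j, t, Fin.val_ne_of_ne hij.ne, rfl⟩
  · exact Or.inr ⟨i, rfl⟩

lemma IsOrtho.of_mem_closure {E : Matrix ι ι k} (hE : E ∈ 𝓔) :
    IsOrtho E := by
  induction hE using Submonoid.closure_induction with
  | mem M hM =>
    rcases orthoElem_cases hM with ⟨a, b, t, hab, rfl⟩ | ⟨i, rfl⟩
    · exact isOrtho_elemOrth (ne_of_apply_ne level hab) t
    · exact isOrtho_wElem i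
  | one => exact isOrtho_one
  | mul _ _ _ _ hg hh => exact hg.mul hh

lemma exists_mul_eq_one_of_mem_closure {E : Matrix ι ι k}
    (hE : E ∈ 𝓔) :
    ∃ F ∈ 𝓔, F * E = 1 := by
  induction hE using Submonoid.closure_induction with
  | mem M hM =>
    rcases orthoElem_cases hM with ⟨a, b, t, hab, rfl⟩ | ⟨i, rfl⟩
    · exact ⟨_, Submonoid.subset_closure (elemOrth_mem_orthoElem hab (-t)),
        elemOrth_neg_mul (ne_of_apply_ne level hab) t⟩
    · exact ⟨_, Submonoid.subset_closure hM, wElem_mul_self i⟩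
  | one => exact ⟨1, one_mem _, one_mul 1⟩
  | mul g h _ _ hg hh =>
    obtain ⟨F, hF, hFg⟩ := hg
    obtain ⟨G, hG, hGh⟩ := hh
    refine ⟨G * F, mul_mem hG hF, ?_⟩
    rw [show G * F * (g * h) = G * (F * g) * h by noncomm_ring, hFg, Matrix.mul_one, hGh]

def FixesBelow (m : ℕ) (g : Matrix ι ι k) : Prop :=
  ∀ x : ι, level x < m → g *ᵥ Pi.single x 1 = Pi.single x 1

lemma FixesBelow.mul {m : ℕ} {g h : Matrix ι ι k} (hg : FixesBelow m g) (hh : FixesBelow m h) :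
    FixesBelow m (g * h) := fun x hx => by
  rw [← mulVec_mulVec, hh x hx, hg x hx]

lemma fixesBelow_elemOrth {m : ℕ} {a b : ι} (ha : m ≤ level a) (hb : m ≤ level b) (t : k) :
    FixesBelow m (elemOrth a b t) := fun x hx =>
  elemOrth_mulVec_single_one (ne_of_apply_ne level (by omega))
    (ne_of_apply_ne level (by rw [level_swap]; omega)) t

lemma IsOrtho.mulVec_apply_of_fixesBelow {m : ℕ} {g : Matrix ι ι k} (hg : IsOrtho g)
    (hfix : FixesBelow m g) {x : ι} (hx : level x < m) (v : ι → k) : (g *ᵥ v) x = v x :=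
  hg.mulVec_apply_of_mulVec_single (hfix _ (by rwa [level_swap])) v

lemma IsOrtho.mulVec_single_apply_of_fixesBelow {m : ℕ} {g : Matrix ι ι k} (hg : IsOrtho g)
    (hfix : FixesBelow m g) {x y : ι} (hx : level x < m) (hy : m ≤ level y) (c : k) :
    (g *ᵥ Pi.single y c) x = 0 := by
  rw [hg.mulVec_apply_of_fixesBelow hfix hx, Pi.single_eq_of_ne (ne_of_apply_ne level (by omega))]

lemma elemOrth_mulVec_apply_self {a b : ι} (h : a ≠ b.swap) (t : k) (v : ι → k) :
    (elemOrth a b t *ᵥ v) a = v a + t * v b := by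
  simp [elemOrth_mulVec, Pi.single_eq_of_ne h]

lemma elemOrth_mulVec_apply_of_ne {a b x : ι} (ha : x ≠ a) (hb : x ≠ b.swap) (t : k)
    (v : ι → k) : (elemOrth a b t *ᵥ v) x = v x := by
  simp [elemOrth_mulVec, Pi.single_eq_of_ne ha, Pi.single_eq_of_ne hb]

lemma exists_mulVec_apply_eq_ite (π : ι) (S : Finset ι) (hS : ∀ y ∈ S, level π < level y)
    (v : ι → k) (hπ : v π ≠ 0) :
    ∃ E ∈ 𝓔,
      (∀ x, level x ≤ level π → x ≠ π → E *ᵥ Pi.single x 1 = Pi.single x 1) ∧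
      ∀ x, x ≠ π.swap → (E *ᵥ v) x = if x ∈ S then 0 else v x := by
  induction S using Finset.induction_on generalizing v with
  | empty => exact ⟨1, one_mem _, fun x _ _ => one_mulVec _, fun x _ => by simp⟩
  | insert y S hyS ih =>
    have hy : level π < level y := hS y (Finset.mem_insert_self y S)
    have hyπ : y ≠ π.swap := ne_of_apply_ne level (by rw [level_swap]; omega)
    set T := elemOrth y π (-(v y / v π))
    have hT : ∀ x, x ≠ π.swap → (T *ᵥ v) x = if x = y then 0 else v x := by
      intro x hx
      split_ifs with hxy
      · rw [hxy, elemOrth_mulVec_apply_self hyπ]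
        field_simp
        ring
      · exact elemOrth_mulVec_apply_of_ne hxy hx _ v
    have hTπ : (T *ᵥ v) π = v π := by
      rw [hT π (swap_ne_self π).symm, if_neg (ne_of_apply_ne level hy.ne)]
    obtain ⟨E, hE, hEfix, hEv⟩ :=
      ih (fun z hz => hS z (Finset.mem_insert_of_mem hz)) (T *ᵥ v) (hTπ ▸ hπ)
    refine ⟨E * T, mul_mem hE (Submonoid.subset_closure (elemOrth_mem_orthoElem hy.ne' _)),
      fun x hx hxπ => ?_, fun x hx => ?_⟩
    · rw [← mulVec_mulVec, elemOrth_mulVec_single_one hxπ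
        (ne_of_apply_ne level (by rw [level_swap]; omega)), hEfix x hx hxπ]
    · rw [← mulVec_mulVec, hEv x hx, hT x hx]
      by_cases hxy : x = y <;> simp [hxy, hyS]

lemma exists_mulVec_eq_single (h2 : (2 : k) ≠ 0) (π : ι) {v : ι → k} (hπ : v π ≠ 0)
    (hlow : ∀ x, level x < level π → v x = 0) (hiso : splitForm v v = 0) :
    ∃ E ∈ 𝓔,
      (∀ x, level x ≤ level π → x ≠ π → E *ᵥ Pi.single x 1 = Pi.single x 1) ∧
      E *ᵥ v = Pi.single π (v π) := by
  obtain ⟨E, hE, hfix, hEv⟩ :=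
    exists_mulVec_apply_eq_ite π {y | level π < level y} (by simp) v hπ
  refine ⟨E, hE, hfix, ?_⟩
  have hEπ : (E *ᵥ v) π = v π := by simpa using hEv π (swap_ne_self π).symm
  rw [← hEπ]
  refine eq_single_of_isotropic h2 (fun x hxπ hxπ' => ?_) (hEπ ▸ hπ)
    (by rw [(IsOrtho.of_mem_closure hE).splitForm_mulVec, hiso])
  rw [hEv x hxπ']
  rcases lt_trichotomy (level x) (level π) with hlt | heq | hgt
  · simp [hlt.not_gt, hlow x hlt]
  · exact ((eq_or_eq_swap_of_level_eq heq).elim hxπ hxπ').elim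
  · simp [hgt]

lemma exists_mulVec_apply_inl_ne_zero {i j : Fin l} (hij : i < j) {v : ι → k} (hv : v ≠ 0)
    (hlow : ∀ x, level x < i → v x = 0) :
    ∃ E ∈ 𝓔, FixesBelow i E ∧ (E *ᵥ v) (.inl i) ≠ 0 := by
  have of_above : ∀ (w : ι → k) (y : ι), (i : ℕ) < level y → w y ≠ 0 →
      ∃ E ∈ 𝓔, FixesBelow i E ∧ (E *ᵥ w) (.inl i) ≠ 0 := by
    intro w y hy hwy
    refine ⟨elemOrth (.inl i) y ((1 - w (.inl i)) / w y),
      Submonoid.subset_closure (elemOrth_mem_orthoElem (by simpa using hy.ne) _),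
      fixesBelow_elemOrth (by simp) hy.le _, ?_⟩
    rw [elemOrth_mulVec_apply_self (ne_of_apply_ne level (by simpa using hy.ne)),
      div_mul_cancel₀ _ hwy]
    simp
  by_cases habove : ∃ y, (i : ℕ) < level y ∧ v y ≠ 0
  · obtain ⟨y, hy, hvy⟩ := habove
    exact of_above v y hy hvy
  push Not at habove
  by_cases hvi : v (.inl i) ≠ 0
  · exact ⟨1, one_mem _, fun x _ => one_mulVec _, by rwa [one_mulVec]⟩
  have hvr : v (.inr i) ≠ 0 := by
    refine fun hvr => hv (funext fun x => ?_)
    rcases lt_trichotomy (level x) i with hlt | heq | hgt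
    · exact hlow x hlt
    · rcases eq_or_eq_swap_of_level_eq (heq.trans (level_inl i).symm) with rfl | rfl
      · exact not_not.mp hvi
      · exact hvr
    · exact habove x hgt
  -- otherwise `v` is a multiple of `e_{-i}`, which a transvection moves to level `j`
  set T : Matrix ι ι k := elemOrth (.inl j) (.inr i) 1
  have hTv : (T *ᵥ v) (.inl j) ≠ 0 := by
    rw [elemOrth_mulVec_apply_self (by simpa using hij.ne'), habove (.inl j) hij, zero_add, one_mul]
    exact hvr
  obtain ⟨E, hE, hfix, hEv⟩ := of_above (T *ᵥ v) (.inl j) hij hTv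
  refine ⟨E * T, mul_mem hE (Submonoid.subset_closure (elemOrth_mem_orthoElem
    (by simpa using Fin.val_ne_of_ne hij.ne') _)),
    hfix.mul (fixesBelow_elemOrth (by simpa using hij.le) (by simp) _), by rwa [← mulVec_mulVec]⟩

lemma elemOrth_mulVec_single_add_single {a b : ι} (hab : level a ≠ level b) (t r s : k) :
    elemOrth a b t *ᵥ (Pi.single a r + Pi.single b s) =
      Pi.single a (r + t * s) + Pi.single b s := by
  have ha : a.swap ≠ a := swap_ne_self a
  have hb : a.swap ≠ b := ne_of_apply_ne level (by rwa [level_swap])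
  rw [elemOrth_mulVec]
  simp [Pi.single_eq_of_ne ha, Pi.single_eq_of_ne hb,
    Pi.single_eq_of_ne (ne_of_apply_ne level hab.symm), Pi.single_add]
  abel

lemma exists_mulVec_single_eq_single_one {a b : ι} (hab : level a ≠ level b) {p : k}
    (hp : p ≠ 0) {m : ℕ} (ha : m ≤ level a) (hb : m ≤ level b) :
    ∃ E ∈ 𝓔, FixesBelow m E ∧ E *ᵥ Pi.single a p = Pi.single a 1 := by
  have mem : ∀ {c d : ι} (t : k), level c ≠ level d → elemOrth c d t ∈ 𝓔 :=
    fun t h => Submonoid.subset_closure (elemOrth_mem_orthoElem h t)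
  refine ⟨elemOrth b a (-p) * elemOrth a b ((1 - p) / p) * elemOrth b a 1,
    mul_mem (mul_mem (mem _ hab.symm) (mem _ hab)) (mem _ hab.symm),
    ((fixesBelow_elemOrth hb ha _).mul (fixesBelow_elemOrth ha hb _)).mul
      (fixesBelow_elemOrth hb ha _), ?_⟩
  calc _ = elemOrth b a (-p) *ᵥ (elemOrth a b ((1 - p) / p) *ᵥ
        (elemOrth b a 1 *ᵥ (Pi.single b 0 + Pi.single a p))) := by
          rw [Pi.single_zero, zero_add, mulVec_mulVec, mulVec_mulVec, Matrix.mul_assoc]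
    _ = elemOrth b a (-p) *ᵥ (elemOrth a b ((1 - p) / p) *ᵥ (Pi.single a p + Pi.single b p)) := by
          rw [elemOrth_mulVec_single_add_single hab.symm, add_comm, zero_add, one_mul]
    _ = elemOrth b a (-p) *ᵥ (Pi.single b p + Pi.single a 1) := by
          rw [elemOrth_mulVec_single_add_single hab, add_comm, div_mul_cancel₀ _ hp, add_sub_cancel]
    _ = Pi.single a 1 := by
          rw [elemOrth_mulVec_single_add_single hab.symm]
          simp

lemma exists_mulVec_eq_single_inl (h2 : (2 : k) ≠ 0) {i j : Fin l} (hij : i < j) {v : ι → k}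
    (hv : v ≠ 0) (hlow : ∀ x, level x < i → v x = 0) (hiso : splitForm v v = 0) :
    ∃ E ∈ 𝓔, FixesBelow i E ∧ E *ᵥ v = Pi.single (.inl i) 1 := by
  obtain ⟨E₁, hE₁, hfix₁, hpivot⟩ := exists_mulVec_apply_inl_ne_zero hij hv hlow
  have hE₁o := IsOrtho.of_mem_closure hE₁
  obtain ⟨E₂, hE₂, hfix₂, hE₂v⟩ := exists_mulVec_eq_single h2 (.inl i) hpivot
    (fun x hx => by rw [hE₁o.mulVec_apply_of_fixesBelow hfix₁ hx, hlow x hx])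
    (by rw [hE₁o.splitForm_mulVec, hiso])
  obtain ⟨E₃, hE₃, hfix₃, hE₃v⟩ := exists_mulVec_single_eq_single_one
    (a := .inl i) (b := .inl j) (by simpa using Fin.val_ne_of_ne hij.ne) hpivot le_rfl
    (by simpa using hij.le)
  refine ⟨E₃ * E₂ * E₁, mul_mem (mul_mem hE₃ hE₂) hE₁,
    (hfix₃.mul fun x hx => hfix₂ x hx.le (ne_of_apply_ne level hx.ne)).mul hfix₁, ?_⟩
  rw [← mulVec_mulVec, ← mulVec_mulVec, hE₂v, hE₃v]

lemma exists_fixesBelow_succ (h2 : (2 : k) ≠ 0) {i j : Fin l} (hij : i < j) {g : Matrix ι ι k}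
    (hg : IsOrtho g) (hfix : FixesBelow i g) :
    ∃ E ∈ 𝓔, FixesBelow (i + 1) (E * g) := by
  obtain ⟨E₁, hE₁, hfix₁, hE₁v⟩ := exists_mulVec_eq_single_inl h2 hij
    (hg.mulVec_ne_zero (Pi.single_ne_zero_iff.2 one_ne_zero))
    (fun x hx => hg.mulVec_single_apply_of_fixesBelow hfix hx (y := .inl i) le_rfl 1)
    (hg.splitForm_mulVec_single_self _)
  set g₁ := E₁ * g
  have hg₁ : IsOrtho g₁ := (IsOrtho.of_mem_closure hE₁).mul hg
  have hg₁inl : g₁ *ᵥ Pi.single (.inl i) 1 = Pi.single (.inl i) 1 := by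
    rw [← mulVec_mulVec, hE₁v]
  -- `B(e_i, g₁ e_{-i}) = B(e_i, e_{-i}) = 1` normalises the pivot of the second column
  have hpivot : (g₁ *ᵥ Pi.single (.inr i) 1) (.inr i) = 1 := by
    simpa [hg₁inl, splitForm_single] using
      hg₁.splitForm_mulVec (Pi.single (.inl i) 1) (Pi.single (.inr i) 1)
  obtain ⟨E₂, hE₂, hfix₂, hE₂v⟩ := exists_mulVec_eq_single h2 (.inr i)
    (v := g₁ *ᵥ Pi.single (.inr i) 1) (by rw [hpivot]; exact one_ne_zero)
    (fun x hx => hg₁.mulVec_single_apply_of_fixesBelow (hfix₁.mul hfix) hx (y := .inr i) le_rfl 1)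
    (hg₁.splitForm_mulVec_single_self _)
  have hfix₂₁ : FixesBelow (i + 1) (E₂ * g₁) := by
    intro x hx
    rw [← mulVec_mulVec]
    rcases Nat.lt_succ_iff_lt_or_eq.mp hx with hx | hx
    · rw [hfix₁.mul hfix x hx, hfix₂ x hx.le (ne_of_apply_ne level hx.ne)]
    · rcases eq_or_eq_swap_of_level_eq (hx.trans (level_inl i).symm) with rfl | rfl
      · rw [hg₁inl, hfix₂ (.inl i) le_rfl Sum.inl_ne_inr]
      · rw [Sum.swap_inl, hE₂v, hpivot]
  exact ⟨E₂ * E₁, mul_mem hE₂ hE₁, by rwa [Matrix.mul_assoc]⟩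

def lastDiag (lam : kˣ) : ι → k :=
  Sum.elim (fun i : Fin l => if (i : ℕ) + 1 = l then (lam : k) else 1)
    (fun i : Fin l => if (i : ℕ) + 1 = l then (lam : k)⁻¹ else 1)

lemma level_lt_of_ne {i : Fin l} (hi : (i : ℕ) + 1 = l) {x : ι} (h₁ : x ≠ .inl i)
    (h₂ : x ≠ .inr i) : level x < i := by
  have hx : level x < l := by cases x <;> simp
  refine lt_of_le_of_ne (by omega) fun h => ?_
  rcases eq_or_eq_swap_of_level_eq (h.trans (level_inl i).symm) with rfl | rfl
  exacts [h₁ rfl, h₂ rfl]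

lemma eq_diagonal_of_fixesBelow (h2 : (2 : k) ≠ 0) {i : Fin l} (hi : (i : ℕ) + 1 = l)
    {g : Matrix ι ι k} (hg : IsOrtho g) (hfix : FixesBelow i g) {lam : kˣ}
    (hlam : (g *ᵥ Pi.single (.inl i) 1) (.inl i) = lam) :
    g = diagonal (lastDiag lam) := by
  have hsupp : ∀ y, level y = i → ∀ x, x ≠ .inl i → x ≠ .inr i → (g *ᵥ Pi.single y 1) x = 0 :=
    fun y hy x h₁ h₂ => hg.mulVec_single_apply_of_fixesBelow hfix (level_lt_of_ne hi h₁ h₂) hy.ge 1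
  have hinl : g *ᵥ Pi.single (.inl i) 1 = Pi.single (.inl i) (lam : k) := by
    rw [← hlam]
    exact eq_single_of_isotropic h2 (hsupp _ rfl) (by rw [hlam]; exact lam.ne_zero)
      (hg.splitForm_mulVec_single_self _)
  have hpivot : (g *ᵥ Pi.single (.inr i) 1) (.inr i) = (lam : k)⁻¹ := by
    refine eq_inv_of_mul_eq_one_right ?_
    simpa [hinl, splitForm_single] using
      hg.splitForm_mulVec (Pi.single (.inl i) 1) (Pi.single (.inr i) 1)
  have hinr : g *ᵥ Pi.single (.inr i) 1 = Pi.single (.inr i) (lam : k)⁻¹ := by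
    rw [← hpivot]
    exact eq_single_of_isotropic h2 (fun x h₁ h₂ => hsupp _ rfl x h₂ h₁)
      (by rw [hpivot]; exact inv_ne_zero lam.ne_zero) (hg.splitForm_mulVec_single_self _)
  refine ext_of_mulVec_single fun x => ?_
  rw [diagonal_mulVec_single, mul_one]
  by_cases h₁ : x = .inl i
  · rw [h₁, hinl]
    simp [lastDiag, hi]
  by_cases h₂ : x = .inr i
  · rw [h₂, hinr]
    simp [lastDiag, hi]
  have hx := level_lt_of_ne hi h₁ h₂
  rw [hfix x hx]
  cases x <;> simp [lastDiag] at hx ⊢ <;> omega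

lemma exists_eq_mul_diagonal_of_fixesBelow_last (h2 : (2 : k) ≠ 0) {i : Fin l}
    (hi : (i : ℕ) + 1 = l) {g : Matrix ι ι k} (hg : IsOrtho g) (hfix : FixesBelow i g) :
    ∃ lam : kˣ, ∃ E ∈ 𝓔, g = E * diagonal (lastDiag lam) := by
  by_cases ha : (g *ᵥ Pi.single (.inl i) 1) (.inl i) = 0
  -- the column `g e_l` is then a nonzero multiple of `e_{-l}`, which `w_l` moves to `e_l`
  · have hc : (g *ᵥ Pi.single (.inl i) 1) (.inr i) ≠ 0 := by
      refine fun hc => hg.mulVec_ne_zero (v := Pi.single (.inl i) 1)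
        (Pi.single_ne_zero_iff.2 one_ne_zero) (funext fun x => ?_)
      by_cases h₁ : x = .inl i
      · rw [h₁, ha, Pi.zero_apply]
      by_cases h₂ : x = .inr i
      · rw [h₂, hc, Pi.zero_apply]
      exact hg.mulVec_single_apply_of_fixesBelow hfix (level_lt_of_ne hi h₁ h₂) le_rfl 1
    have hw : ((wElem i * g) *ᵥ Pi.single (.inl i) 1) (.inl i) ≠ 0 := by
      rw [← mulVec_mulVec, wElem_mulVec_apply_inl]
      exact neg_ne_zero.mpr hc
    have hfixw : FixesBelow i (wElem i * g) :=
      FixesBelow.mul (fun x hx => wElem_mulVec_single_one (Nat.ne_of_lt hx)) hfix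
    refine ⟨Units.mk0 _ hw, wElem i, Submonoid.subset_closure (Or.inr ⟨i, hi, rfl⟩), ?_⟩
    rw [← eq_diagonal_of_fixesBelow h2 hi ((isOrtho_wElem i).mul hg) hfixw rfl,
      ← Matrix.mul_assoc, wElem_mul_self, Matrix.one_mul]
  · exact ⟨Units.mk0 _ ha, 1, one_mem _, by
      rw [Matrix.one_mul]; exact eq_diagonal_of_fixesBelow h2 hi hg hfix rfl⟩

lemma exists_eq_mul_diagonal (h2 : (2 : k) ≠ 0) (n : ℕ) :
    ∀ i : ℕ, i + n + 1 = l → ∀ g : Matrix ι ι k, IsOrtho g → FixesBelow i g →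
      ∃ lam : kˣ, ∃ E ∈ 𝓔, g = E * diagonal (lastDiag lam) := by
  induction n with
  | zero =>
    intro i hi g hg hfix
    exact exists_eq_mul_diagonal_of_fixesBelow_last h2 (i := ⟨i, by omega⟩) hi hg hfix
  | succ n ih =>
    intro i hi g hg hfix
    obtain ⟨E, hE, hfixE⟩ := exists_fixesBelow_succ h2 (i := ⟨i, by omega⟩)
      (j := ⟨i + 1, by omega⟩) (Nat.lt_succ_self i) hg hfix
    obtain ⟨lam, E', hE', hEg⟩ :=
      ih (i + 1) (by omega) _ ((IsOrtho.of_mem_closure hE).mul hg) hfixE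
    obtain ⟨F, hF, hFE⟩ := exists_mul_eq_one_of_mem_closure hE
    refine ⟨lam, F * E', mul_mem hF hE', ?_⟩
    rw [Matrix.mul_assoc, ← hEg, ← Matrix.mul_assoc, hFE, Matrix.one_mul]

end SplitOrthogonal

theorem O_even_gaussian_elimination_general (k : Type*) [Field k] (hchar : ringChar k ≠ 2)
    (l : ℕ) (hl : 2 ≤ l)
    (g : Matrix (Fin l ⊕ Fin l) (Fin l ⊕ Fin l) k)
    (hsim : gᵀ * (Matrix.fromBlocks 0 1 1 0 :
        Matrix (Fin l ⊕ Fin l) (Fin l ⊕ Fin l) k) * g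
      = (Matrix.fromBlocks 0 1 1 0 :
        Matrix (Fin l ⊕ Fin l) (Fin l ⊕ Fin l) k)) :
    ∃ lam : kˣ, ∃ E ∈ Submonoid.closure (orthoElem k l),
      g = E * Matrix.diagonal (Sum.elim
            (fun i : Fin l => if (i : ℕ) + 1 = l then (lam : k) else 1)
            (fun i : Fin l => if (i : ℕ) + 1 = l then (lam : k)⁻¹ else 1)) :=
  SplitOrthogonal.exists_eq_mul_diagonal (Ring.two_ne_zero hchar) (l - 1) 0 (by omega) g hsim
    fun _ hx => absurd hx (Nat.not_lt_zero _)

/-- Gaussian elimination in the split orthogonal group `O(2l, k)`: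
every `g` with `ᵀg·β·g = β` is a product of elementary split orthogonal matrices and a
diagonal matrix `diag(1, …, 1, λ, 1, …, 1, λ⁻¹)`. -/
theorem O_even_gaussian_elimination (k : Type*) [Field k] (hchar : ringChar k ≠ 2)
    (l : ℕ) (hl : 2 ≤ l)
    (g : Matrix (Fin l ⊕ Fin l) (Fin l ⊕ Fin l) k) (hg : IsUnit g.det)
    (hsim : gᵀ * (Matrix.fromBlocks 0 1 1 0 :
        Matrix (Fin l ⊕ Fin l) (Fin l ⊕ Fin l) k) * g
      = (Matrix.fromBlocks 0 1 1 0 :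
        Matrix (Fin l ⊕ Fin l) (Fin l ⊕ Fin l) k)) :
    ∃ lam : kˣ, ∃ E ∈ Submonoid.closure (orthoElem k l),
      g = E * Matrix.diagonal (Sum.elim
            (fun i : Fin l => if (i : ℕ) + 1 = l then (lam : k) else 1)
            (fun i : Fin l => if (i : ℕ) + 1 = l then (lam : k)⁻¹ else 1)) :=
  O_even_gaussian_elimination_general k hchar l hl g hsim
end

section
/- Let k be a field with char k ≠ 2, let l ≥ 1, let A, B, D be l×l matrices over k, let g be the 2l×2l block matrix [[A, B],[0, D]], and let μ ∈ kˣ. Then: (1) ᵀg·J·g = μ·J, where J = [[0, I_l],[−I_l, 0]], holds if and only if A is invertible, D = μ·ᵀA⁻¹, and the matrix A⁻¹B is symmetric (ᵀ(A⁻¹B) = A⁻¹B); and (2) ᵀg·β·g = μ·β, where β = [[0, I_l],[I_l, 0]], holds if and only if A is invertible, D = μ·ᵀA⁻¹, and the matrix A⁻¹B is skew-symmetric (ᵀ(A⁻¹B) = −A⁻¹B). -/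
open Matrix

private lemma aux_key {k : Type*} [Field k] {l : ℕ} (A D : Matrix (Fin l) (Fin l) k) (μ : kˣ) :
    Aᵀ * D = (μ : k) • 1 ↔ IsUnit A ∧ D = (μ : k) • (A⁻¹)ᵀ := by
  constructor
  · intro h
    have hA : IsUnit A := by
      have h1 : Aᵀ * (((μ⁻¹ : kˣ) : k) • D) = 1 := by
        rw [Matrix.mul_smul, h, smul_smul]
        simp
      have : IsUnit Aᵀ := ⟨⟨Aᵀ, _, h1, mul_eq_one_comm.mp h1⟩, rfl⟩
      simpa [Matrix.isUnit_iff_isUnit_det] using this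
    refine ⟨hA, ?_⟩
    have hAt : IsUnit Aᵀ.det := by
      rw [Matrix.det_transpose]; exact (Matrix.isUnit_iff_isUnit_det A).mp hA
    calc D = (Aᵀ)⁻¹ * (Aᵀ * D) := by
            rw [← Matrix.mul_assoc, Matrix.nonsing_inv_mul _ hAt, Matrix.one_mul]
    _ = (μ : k) • (A⁻¹)ᵀ := by
            rw [h, Matrix.mul_smul, Matrix.mul_one, Matrix.transpose_nonsing_inv]
  · rintro ⟨hA, rfl⟩
    rw [Matrix.mul_smul, Matrix.transpose_nonsing_inv, Matrix.mul_nonsing_inv]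
    rw [Matrix.det_transpose]; exact (Matrix.isUnit_iff_isUnit_det A).mp hA

private lemma aux_tr {k : Type*} [Field k] {l : ℕ} {A D : Matrix (Fin l) (Fin l) k} {μ : kˣ}
    (h : Aᵀ * D = (μ : k) • 1) : Dᵀ * A = (μ : k) • 1 := by
  have := congrArg Matrix.transpose h
  simpa [Matrix.transpose_mul] using this

/-- Criterion for a block upper-triangular matrix `[[A, B], [0, D]]` to lie in the
symplectic similitude group (w.r.t. `J = [[0, 1], [-1, 0]]`), respectively in the split
orthogonal similitude group (w.r.t. `β = [[0, 1], [1, 0]]`), with similitude factor `μ`. -/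
theorem blockTriangular_mem_similitude_iff (k : Type*) [Field k] (hchar : ringChar k ≠ 2)
    (l : ℕ) (hl : 1 ≤ l) (A B D : Matrix (Fin l) (Fin l) k) (μ : kˣ) :
    ((Matrix.fromBlocks A B 0 D)ᵀ *
        (Matrix.fromBlocks 0 1 (-1) 0 : Matrix (Fin l ⊕ Fin l) (Fin l ⊕ Fin l) k) *
        Matrix.fromBlocks A B 0 D
      = (μ : k) • (Matrix.fromBlocks 0 1 (-1) 0 : Matrix (Fin l ⊕ Fin l) (Fin l ⊕ Fin l) k)
      ↔ IsUnit A ∧ D = (μ : k) • (A⁻¹)ᵀ ∧ (A⁻¹ * B)ᵀ = A⁻¹ * B) ∧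
    ((Matrix.fromBlocks A B 0 D)ᵀ *
        (Matrix.fromBlocks 0 1 1 0 : Matrix (Fin l ⊕ Fin l) (Fin l ⊕ Fin l) k) *
        Matrix.fromBlocks A B 0 D
      = (μ : k) • (Matrix.fromBlocks 0 1 1 0 : Matrix (Fin l ⊕ Fin l) (Fin l ⊕ Fin l) k)
      ↔ IsUnit A ∧ D = (μ : k) • (A⁻¹)ᵀ ∧ (A⁻¹ * B)ᵀ = -(A⁻¹ * B)) := by
  have hμ : (μ : k) ≠ 0 := μ.ne_zero
  -- helper computations, valid whenever `D = μ • (A⁻¹)ᵀ`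
  have e1 : ∀ A : Matrix (Fin l) (Fin l) k,
      ((μ : k) • (A⁻¹)ᵀ)ᵀ * B = (μ : k) • (A⁻¹ * B) := by
    intro A
    rw [Matrix.transpose_smul, Matrix.transpose_transpose, Matrix.smul_mul]
  have e2 : ∀ A : Matrix (Fin l) (Fin l) k,
      Bᵀ * ((μ : k) • (A⁻¹)ᵀ) = (μ : k) • (A⁻¹ * B)ᵀ := by
    intro A
    rw [Matrix.mul_smul, ← Matrix.transpose_mul]
  constructor
  · have hJ : (Matrix.fromBlocks A B 0 D)ᵀ *
        (Matrix.fromBlocks 0 1 (-1) 0 : Matrix (Fin l ⊕ Fin l) (Fin l ⊕ Fin l) k) *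
        Matrix.fromBlocks A B 0 D
      = (μ : k) • (Matrix.fromBlocks 0 1 (-1) 0 : Matrix (Fin l ⊕ Fin l) (Fin l ⊕ Fin l) k)
      ↔ (Aᵀ * D = (μ : k) • 1 ∧ Dᵀ * A = (μ : k) • 1 ∧ -(Dᵀ * B) + Bᵀ * D = 0) := by
      rw [Matrix.fromBlocks_transpose, Matrix.fromBlocks_multiply, Matrix.fromBlocks_multiply,
        Matrix.fromBlocks_smul, Matrix.fromBlocks_inj]
      simp
    rw [hJ]
    constructor
    · rintro ⟨h1, -, h3⟩
      obtain ⟨hA, rfl⟩ := (aux_key A D μ).mp h1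
      refine ⟨hA, rfl, ?_⟩
      rw [e1, e2, neg_add_eq_zero] at h3
      exact smul_right_injective _ hμ h3.symm
    · rintro ⟨hA, rfl, hsym⟩
      have h1 : Aᵀ * ((μ : k) • (A⁻¹)ᵀ) = (μ : k) • 1 := (aux_key A _ μ).mpr ⟨hA, rfl⟩
      refine ⟨h1, aux_tr h1, ?_⟩
      rw [e1, e2, neg_add_eq_zero, hsym]
  · have hB : (Matrix.fromBlocks A B 0 D)ᵀ *
        (Matrix.fromBlocks 0 1 1 0 : Matrix (Fin l ⊕ Fin l) (Fin l ⊕ Fin l) k) *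
        Matrix.fromBlocks A B 0 D
      = (μ : k) • (Matrix.fromBlocks 0 1 1 0 : Matrix (Fin l ⊕ Fin l) (Fin l ⊕ Fin l) k)
      ↔ (Aᵀ * D = (μ : k) • 1 ∧ Dᵀ * A = (μ : k) • 1 ∧ Dᵀ * B + Bᵀ * D = 0) := by
      rw [Matrix.fromBlocks_transpose, Matrix.fromBlocks_multiply, Matrix.fromBlocks_multiply,
        Matrix.fromBlocks_smul, Matrix.fromBlocks_inj]
      simp
    rw [hB]
    constructor
    · rintro ⟨h1, -, h3⟩
      obtain ⟨hA, rfl⟩ := (aux_key A D μ).mp h1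
      refine ⟨hA, rfl, ?_⟩
      rw [e1, e2, ← smul_add] at h3
      rcases smul_eq_zero.mp h3 with h | h
      · exact absurd h hμ
      · rw [add_comm, add_eq_zero_iff_eq_neg] at h
        exact h
    · rintro ⟨hA, rfl, hskew⟩
      have h1 : Aᵀ * ((μ : k) • (A⁻¹)ᵀ) = (μ : k) • 1 := (aux_key A _ μ).mpr ⟨hA, rfl⟩
      refine ⟨h1, aux_tr h1, ?_⟩
      rw [e1, e2, ← smul_add, add_comm, add_eq_zero_iff_eq_neg.mpr hskew, smul_zero]
end

section
/- Let k be a field with char k ≠ 2, V a finite-dimensional k-vector space, B a non-degenerate symmetric bilinear form on V, and g : V → V a linear isometry of B (B(gx, gy) = B(x, y) for all x, y ∈ V). Then: (1) for all x, y, y₁ ∈ V, if (1−g)y = (1−g)y₁ then B((1−g)x, y) = B((1−g)x, y₁) (so the Wall form [u,v]_g := B(u, y), for u = (1−g)x and v = (1−g)y, is well-defined on the residual space V_g = Im(1−g)); (2) for all x, y ∈ V, B((1−g)x, y) + B((1−g)y, x) = B((1−g)x, (1−g)y) (i.e., [u,v]_g + [v,u]_g = B(u,v)); and (3) for all x, y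 ∈ V, B((1−g)x, y) = −B((1−g)y, gx) (i.e., [u,v]_g = −[v, gu]_g). -/
/-- Basic properties of the Wall form of an isometry `g` of a non-degenerate symmetric
bilinear form `B`: it is well defined on the residual space `V_g = Im(1 - g)`, it satisfies
`[u,v]_g + [v,u]_g = B(u,v)` and `[u,v]_g = -[v, gu]_g`. -/
theorem wall_form_properties (k V : Type*) [Field k] [AddCommGroup V] [Module k V]
    [FiniteDimensional k V] (hchar : ringChar k ≠ 2)
    (B : V →ₗ[k] V →ₗ[k] k)
    (hnd : ∀ x : V, (∀ y : V, B x y = 0) → x = 0)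
    (hsymm : ∀ x y : V, B x y = B y x)
    (g : V →ₗ[k] V) (hg : ∀ x y : V, B (g x) (g y) = B x y) :
    (∀ x y y₁ : V, y - g y = y₁ - g y₁ → B (x - g x) y = B (x - g x) y₁) ∧
    (∀ x y : V, B (x - g x) y + B (y - g y) x = B (x - g x) (y - g y)) ∧
    (∀ x y : V, B (x - g x) y = - B (y - g y) (g x)) := by
  refine ⟨?_, ?_, ?_⟩
  · intro x y y₁ h
    have hz : y - y₁ = g y - g y₁ := sub_eq_sub_iff_sub_eq_sub.mp h
    have key : B (x - g x) y - B (x - g x) y₁ = 0 := by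
      have hgz : g (y - y₁) = y - y₁ := by rw [map_sub, ← hz]
      have h1 : B (g x) (y - y₁) = B x (y - y₁) := by rw [← hg x (y - y₁), hgz]
      simp only [LinearMap.sub_apply, map_sub] at h1 ⊢
      linear_combination -h1
    linear_combination key
  · intro x y
    simp only [map_sub, LinearMap.sub_apply, hg x y, hsymm y x, hsymm (g y) x]
    ring
  · intro x y
    simp only [map_sub, LinearMap.sub_apply, hg y x, hsymm y x, hsymm y (g x)]
    ring
end

section
/- Let k be a field with char k ≠ 2, V a finite-dimensional k-vector space, B a non-degenerate symmetric bilinear form on V, and g : V → V a linear isometry of B (B(gx, gy) = B(x, y) for all x, y ∈ V). Then the Wall form of g is symmetric, i.e., B((1−g)x, y) = B((1−g)y, x) for all x, y ∈ V, if and only if g² is the identity map on V. -/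
/-- The Wall form of an isometry `g` of a non-degenerate symmetric bilinear form `B` is
symmetric if and only if `g² = 1`. -/
theorem wall_form_symm_iff_sq_eq_one (k V : Type*) [Field k] [AddCommGroup V] [Module k V]
    [FiniteDimensional k V] (hchar : ringChar k ≠ 2)
    (B : V →ₗ[k] V →ₗ[k] k)
    (hnd : ∀ x : V, (∀ y : V, B x y = 0) → x = 0)
    (hsymm : ∀ x y : V, B x y = B y x)
    (g : V →ₗ[k] V) (hg : ∀ x y : V, B (g x) (g y) = B x y) :
    (∀ x y : V, B (x - g x) y = B (y - g y) x) ↔ g ∘ₗ g = LinearMap.id := by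
  constructor
  · intro h
    apply LinearMap.ext
    intro y
    have h1 : ∀ x y : V, B (g x) y = B x (g y) := by
      intro x y
      have hxy := h x y
      simp only [map_sub, LinearMap.sub_apply] at hxy
      linear_combination hsymm x y - hxy + hsymm (g y) x
    have key : ∀ x : V, B (g (g y) - y) x = 0 := by
      intro x
      rw [hsymm]
      have := h1 x (g y)
      rw [hg x y] at this
      simp only [map_sub]
      linear_combination -this
    exact sub_eq_zero.mp (hnd _ key)
  · intro h x y
    have hgg : ∀ z : V, g (g z) = z := fun z => LinearMap.ext_iff.mp h z
    have h1 : B (g x) y = B x (g y) := by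
      conv_lhs => rw [← hgg y]
      rw [hg]
    simp only [map_sub, LinearMap.sub_apply]
    linear_combination hsymm x y - h1 + hsymm (g y) x
end

section
/- Let k be a field with a ring automorphism σ satisfying σ∘σ = id, let β ∈ GL(n,k), and let T ∈ GL(n,k) satisfy ᵀ(σT)·β·T = β, where σT applies σ to each entry of T. Define B(u,v) = ᵀ(σu)·β·v for column vectors u, v ∈ kⁿ. Let f ∈ k[x] be a polynomial of degree d with f(0) ≠ 0, and let f̃(x) = σ(f(0))⁻¹ · x^d · (σf)(x⁻¹) be its U-reciprocal polynomial. Then the image of f(T) and the kernel of f̃(T) are mutually orthogonal with respect to B: for all u, w ∈ kⁿ, if f̃(T)·u = 0 then B(u, f(T)·w) = 0. -/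
/-!
Put `A = ᵀ(σT)`. Unitarity of `T` reads `A β T = β`, hence `A^i β T^i = β` for all `i`, and
comparing coefficients gives `β f(T) = f*(A) β T^d`, where `f*` is `f` reflected at degree
`d = deg f`. As `f*(A) = ᵀ(σ (g(T)))` for `g = x^d (σf)(x⁻¹)`, this moves the polynomial to the
other side of the form: `B(u, f(T) w) = B(g(T) u, T^d w)`, and `g(T) u = 0` because
`f̃ = σ(f(0))⁻¹ g`.
-/

open Matrix Polynomial

theorem pow_mul_mul_pow_of_mul_mul_eq {M : Type*} [Monoid M] {a b c : M} (h : a * b * c = b) :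
    ∀ m : ℕ, a ^ m * b * c ^ m = b
  | 0 => by simp
  | m + 1 => by
    calc a ^ (m + 1) * b * c ^ (m + 1) = a ^ m * (a * b * c) * c ^ m := by
          rw [pow_succ a, pow_succ' c]
          simp only [mul_assoc]
      _ = b := by rw [h, pow_mul_mul_pow_of_mul_mul_eq h m]

theorem mul_aeval_eq_aeval_reflect_mul_mul_pow {R A : Type*} [CommSemiring R] [Semiring A]
    [Algebra R A] {a b c : A} (h : a * b * c = b) {N : ℕ} {f : R[X]} (hf : f.natDegree ≤ N) :
    b * aeval c f = aeval a (reflect N f) * b * c ^ N := by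
  have hrefl : (reflect N f).natDegree < N + 1 :=
    Nat.lt_succ_of_le (natDegree_reflect_le.trans (max_le le_rfl hf))
  rw [aeval_eq_sum_range' (Nat.lt_succ_of_le hf), aeval_eq_sum_range' hrefl, Finset.mul_sum,
    Finset.sum_mul, Finset.sum_mul, ← Finset.sum_range_reflect]
  refine Finset.sum_congr rfl fun i hi => ?_
  have hi : i ≤ N := Nat.lt_succ_iff.mp (Finset.mem_range.mp hi)
  rw [coeff_reflect, Nat.succ_sub_one, revAt_le hi, mul_smul_comm, smul_mul_assoc, smul_mul_assoc]
  congr 1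
  calc b * c ^ (N - i) = a ^ i * b * c ^ i * c ^ (N - i) := by
        rw [pow_mul_mul_pow_of_mul_mul_eq h]
    _ = a ^ i * b * c ^ N := by rw [mul_assoc, ← pow_add, Nat.add_sub_cancel' hi]

theorem Matrix.aeval_transpose {n R : Type*} [Fintype n] [DecidableEq n] [CommSemiring R]
    (M : Matrix n n R) (p : R[X]) : aeval Mᵀ p = (aeval M p)ᵀ := by
  induction p using Polynomial.induction_on' with
  | add p q hp hq => simp only [map_add, hp, hq, transpose_add]
  | monomial m r =>
    rw [aeval_monomial, aeval_monomial, ← Algebra.smul_def, ← Algebra.smul_def, transpose_smul,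
      transpose_pow]

theorem Matrix.map_aeval {n R S : Type*} [Fintype n] [DecidableEq n] [CommSemiring R]
    [CommSemiring S] (σ : R →+* S) (M : Matrix n n R) (p : R[X]) :
    (aeval M p).map σ = aeval (M.map σ) (p.map σ) :=
  map_aeval_eq_aeval_map (ψ := σ.mapMatrix)
    (by ext; simp [algebraMap_matrix_apply, apply_ite σ]) p M

theorem Matrix.dotProduct_map_transpose_mulVec {m n R S : Type*} [Fintype m] [Fintype n]
    [CommSemiring R] [CommSemiring S] (σ : R →+* S) (N : Matrix m n R) (u : n → R) (v : m → S) :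
    (fun i => σ (u i)) ⬝ᵥ ((N.map σ)ᵀ *ᵥ v) = (fun i => σ ((N *ᵥ u) i)) ⬝ᵥ v := by
  rw [dotProduct_mulVec, vecMul_transpose]
  congr 1
  ext i
  rw [RingHom.map_mulVec]
  rfl

theorem image_orthogonal_ker_reciprocal_general {n : ℕ} {k : Type*} [Field k]
    (σ : k →+* k) (hσ : ∀ a : k, σ (σ a) = a)
    (β T : Matrix (Fin n) (Fin n) k)
    (hTisom : (T.map σ)ᵀ * β * T = β)
    (f : Polynomial k) (hf0 : f.coeff 0 ≠ 0)
    (u w : Fin n → k)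
    (hu : (aeval T) (C (σ (f.coeff 0))⁻¹ * (f.map σ).reverse) *ᵥ u = 0) :
    (fun i => σ (u i)) ⬝ᵥ (β *ᵥ ((aeval T) f *ᵥ w)) = 0 := by
  set d := f.natDegree
  have hreverse : (f.map σ).reverse = reflect d (f.map σ) := by
    rw [reverse, natDegree_map]
  have hker : aeval T (reflect d (f.map σ)) *ᵥ u = 0 := by
    rwa [hreverse, ← smul_eq_C_mul, map_smul, smul_mulVec, smul_eq_zero,
      or_iff_right (inv_ne_zero ((map_ne_zero σ).mpr hf0))] at hu
  have hinvol : (reflect d (f.map σ)).map σ = reflect d f := by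
    rw [← reflect_map, Polynomial.map_map, show σ.comp σ = RingHom.id k from RingHom.ext hσ,
      Polynomial.map_id]
  calc (fun i => σ (u i)) ⬝ᵥ (β *ᵥ (aeval T f *ᵥ w))
      = (fun i => σ (u i)) ⬝ᵥ (aeval (T.map σ)ᵀ (reflect d f) *ᵥ (β * T ^ d) *ᵥ w) := by
        rw [mulVec_mulVec, mulVec_mulVec, ← Matrix.mul_assoc,
          mul_aeval_eq_aeval_reflect_mul_mul_pow hTisom le_rfl]
    _ = (fun i => σ ((aeval T (reflect d (f.map σ)) *ᵥ u) i)) ⬝ᵥ ((β * T ^ d) *ᵥ w) := by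
        rw [← hinvol, aeval_transpose, ← map_aeval, dotProduct_map_transpose_mulVec]
    _ = 0 := by simp [hker]

/-- For a unitary transformation `T` with respect to the sesquilinear form
`B(u, v) = ᵀ(σu)·β·v` (where `σ` is an involutive automorphism of `k`), and a polynomial
`f` with `f(0) ≠ 0`, the image of `f(T)` and the kernel of the U-reciprocal polynomial
`f̃(x) = σ(f(0))⁻¹·x^deg f·(σf)(x⁻¹)` evaluated at `T` are mutually orthogonal. -/
theorem image_orthogonal_ker_reciprocal {n : ℕ} {k : Type*} [Field k]
    (σ : k →+* k) (hσ : ∀ a : k, σ (σ a) = a)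
    (β T : Matrix (Fin n) (Fin n) k) (hβ : IsUnit β.det) (hT : IsUnit T.det)
    (hTisom : (T.map σ)ᵀ * β * T = β)
    (f : Polynomial k) (hf0 : f.coeff 0 ≠ 0)
    (u w : Fin n → k)
    (hu : (aeval T) (C (σ (f.coeff 0))⁻¹ * (f.map σ).reverse) *ᵥ u = 0) :
    (fun i => σ (u i)) ⬝ᵥ (β *ᵥ ((aeval T) f *ᵥ w)) = 0 :=
  image_orthogonal_ker_reciprocal_general σ hσ β T hTisom f hf0 u w hu
end

section
/- Let k be a field with a ring automorphism σ satisfying σ∘σ = id, let β ∈ GL(n,k), and let T ∈ GL(n,k) satisfy ᵀ(σT)·β·T = β. Define B(u,v) = ᵀ(σu)·β·v for column vectors u, v ∈ kⁿ. Let f, h ∈ k[x] be coprime polynomials with nonzero constant terms such that f is self-U-reciprocal (f̃ = f). Then the kernels of f(T) and h(T) are mutually orthogonal with respect to B: for all u, v ∈ kⁿ with f(T)·u = 0 and h(T)·v = 0, one has B(u,v) = 0. -/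
open Matrix Polynomial

section Aux

variable {k : Type*} [Field k]

lemma reflect_reflect' {R : Type*} [Semiring R] (N : ℕ) (p : R[X]) :
    reflect N (reflect N p) = p := by
  ext i
  rw [coeff_reflect, coeff_reflect, revAt_invol]

lemma aeval_comm_aux {A : Type*} [Ring A] [Algebra k A] {x y z : A}
    (hxy : y * z = z * x) (p : k[X]) : aeval y p * z = z * aeval x p := by
  have hpow : ∀ i : ℕ, y ^ i * z = z * x ^ i := by
    intro i
    induction i with
    | zero => simp
    | succ m ih =>
      rw [pow_succ, mul_assoc, hxy, ← mul_assoc, ih, mul_assoc, ← pow_succ]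
  induction p using Polynomial.induction_on' with
  | add p q hp hq => rw [_root_.map_add, _root_.map_add, add_mul, mul_add, hp, hq]
  | monomial i c =>
    rw [aeval_monomial, aeval_monomial, mul_assoc, hpow, ← mul_assoc,
      Algebra.commutes, mul_assoc]

lemma aeval_transpose_aux {n : ℕ} (M : Matrix (Fin n) (Fin n) k) (p : k[X]) :
    (aeval M p)ᵀ = aeval Mᵀ p := by
  induction p using Polynomial.induction_on' with
  | add p q hp hq => rw [_root_.map_add, _root_.map_add, transpose_add, hp, hq]
  | monomial i c =>
    rw [aeval_monomial, aeval_monomial, ← Algebra.smul_def, ← Algebra.smul_def,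
      transpose_smul, transpose_pow]

lemma aeval_map_matrix_aux {n : ℕ} (σ : k →+* k) (hσ : ∀ a : k, σ (σ a) = a)
    (M : Matrix (Fin n) (Fin n) k) (p : k[X]) :
    aeval (M.map σ) p = (aeval M (p.map σ)).map σ := by
  induction p using Polynomial.induction_on' with
  | add p q hp hq =>
    rw [_root_.map_add, Polynomial.map_add, _root_.map_add, Matrix.map_add _ (map_add σ), hp, hq]
  | monomial i c =>
    rw [map_monomial, aeval_monomial, aeval_monomial, ← Algebra.smul_def, ← Algebra.smul_def]
    have hpow : (M.map σ) ^ i = (M ^ i).map σ := by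
      simpa [RingHom.mapMatrix_apply] using (map_pow σ.mapMatrix M i).symm
    rw [hpow]
    ext j l
    simp [Matrix.map_apply, hσ]

lemma mulVec_map_sigma_aux {n : ℕ} (σ : k →+* k) (N : Matrix (Fin n) (Fin n) k)
    (u : Fin n → k) :
    (N.map σ) *ᵥ (fun i => σ (u i)) = fun i => σ ((N *ᵥ u) i) := by
  funext i
  simp only [Matrix.mulVec, dotProduct, Matrix.map_apply]
  rw [map_sum σ]
  exact Finset.sum_congr rfl fun j _ => (map_mul σ _ _).symm

lemma aeval_reflect_mul_pow_aux {A : Type*} [Ring A] [Algebra k A] (x : A) [Invertible x]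
    (N : ℕ) (f : k[X]) (hf : f.natDegree ≤ N) :
    aeval (⅟ x) (reflect N f) * x ^ N = aeval x f := by
  refine induction_with_natDegree_le
    (fun f => aeval (⅟ x) (reflect N f) * x ^ N = aeval x f) _ ?_ ?_ ?_ f hf
  · simp
  · intro m r _ hmN
    rw [reflect_C_mul_X_pow, revAt_le hmN, _root_.map_mul, _root_.map_mul, aeval_C, aeval_C,
      aeval_X_pow, aeval_X_pow]
    conv in x ^ N => rw [← Nat.sub_add_cancel hmN]
    rw [pow_add, mul_assoc, ← mul_assoc ((⅟ x) ^ (N - m)), ← invOf_pow, invOf_mul_self,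
      one_mul]
  · intro p q _ _ hp hq
    rw [reflect_add, _root_.map_add, add_mul, hp, hq, _root_.map_add]

end Aux

/-- For a unitary transformation `T` with respect to the sesquilinear form
`B(u, v) = ᵀ(σu)·β·v` (where `σ` is an involutive automorphism of `k`), and coprime
polynomials `f, h` with nonzero constant terms such that `f` is self-U-reciprocal
(`f̃ = f`, where `f̃(x) = σ(f(0))⁻¹·x^deg f·(σf)(x⁻¹)`), the kernels of `f(T)` and `h(T)`
are mutually orthogonal. -/
theorem ker_orthogonal_ker_of_selfUreciprocal {n : ℕ} {k : Type*} [Field k]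
    (σ : k →+* k) (hσ : ∀ a : k, σ (σ a) = a)
    (β T : Matrix (Fin n) (Fin n) k) (hβ : IsUnit β.det) (hT : IsUnit T.det)
    (hTisom : (T.map σ)ᵀ * β * T = β)
    (f h : Polynomial k) (hf0 : f.coeff 0 ≠ 0) (hh0 : h.coeff 0 ≠ 0)
    (hcop : IsCoprime f h)
    (hself : C (σ (f.coeff 0))⁻¹ * (f.map σ).reverse = f)
    (u v : Fin n → k)
    (hu : (aeval T) f *ᵥ u = 0) (hv : (aeval T) h *ᵥ v = 0) :
    (fun i => σ (u i)) ⬝ᵥ (β *ᵥ v) = 0 := by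
  letI := T.invertibleOfIsUnitDet hT
  obtain ⟨a, b, hab⟩ := hcop
  set c := σ (f.coeff 0) with hc
  have hcne : c ≠ 0 := by
    intro hcz
    apply hf0
    have h2 := hσ (f.coeff 0)
    rw [← hc, hcz, map_zero] at h2
    exact h2.symm
  -- reverse of f.map σ equals C c * f
  have hrev : (f.map σ).reverse = C c * f := by
    have h1 : C c * (C c⁻¹ * (f.map σ).reverse) = C c * f := by rw [hself]
    rwa [← mul_assoc, ← C_mul, mul_inv_cancel₀ hcne, C_1, one_mul] at h1
  have hd' : (f.map σ).natDegree = f.natDegree := natDegree_map σ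
  -- f.map σ = C c * reflect d f
  have hmapf : f.map σ = C c * reflect f.natDegree f := by
    have h2 := congrArg (reflect ((f.map σ).natDegree)) hrev
    rwa [Polynomial.reverse, reflect_reflect', reflect_C_mul, hd'] at h2
  set d := f.natDegree
  -- aeval ⅟T (reflect d f) kills u
  have harev : aeval (⅟ T) (reflect d f) *ᵥ u = 0 := by
    have hkey := aeval_reflect_mul_pow_aux T d f le_rfl
    have hcomm : aeval T f * T ^ d = T ^ d * aeval T f :=
      aeval_comm_aux (((Commute.refl T).pow_right d).eq) f
    have hArev : aeval (⅟ T) (reflect d f) = ⅟ (T ^ d) * aeval T f := by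
      have h3 : aeval (⅟ T) (reflect d f) * T ^ d * ⅟ (T ^ d)
          = aeval (⅟ T) (reflect d f) := by
        rw [mul_assoc, mul_invOf_self, mul_one]
      rw [← h3, hkey, (Commute.invOf_right hcomm).eq]
    rw [hArev, ← mulVec_mulVec, hu, mulVec_zero]
  have hFu : aeval (⅟ T) (f.map σ) *ᵥ u = 0 := by
    rw [hmapf, _root_.map_mul, aeval_C, ← mulVec_mulVec, harev, mulVec_zero]
  have hafu : aeval (⅟ T) ((a * f).map σ) *ᵥ u = 0 := by
    rw [Polynomial.map_mul, _root_.map_mul, ← mulVec_mulVec, hFu, mulVec_zero]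
  -- the conjugation matrix
  set R := ((⅟ T).map σ)ᵀ with hR
  have hRβ : R * β = β * T := by
    conv_lhs => rw [← hTisom]
    rw [← mul_assoc, ← mul_assoc, hR, ← transpose_mul, ← Matrix.map_mul,
      mul_invOf_self, Matrix.map_one σ (map_zero σ) (map_one σ), transpose_one, one_mul]
  have hβp : β * aeval T (a * f) = aeval R (a * f) * β :=
    (aeval_comm_aux hRβ (a * f)).symm
  have hv1 : aeval T (a * f) *ᵥ v = v := by
    have h1 : (aeval T (a * f) + aeval T (b * h)) *ᵥ v = v := by
      rw [← _root_.map_add, hab, _root_.map_one, one_mulVec]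
    have h2 : aeval T (b * h) *ᵥ v = 0 := by
      rw [_root_.map_mul, ← mulVec_mulVec, hv, mulVec_zero]
    rwa [add_mulVec, h2, add_zero] at h1
  have hz : (fun i => σ (u i)) ᵥ* aeval R (a * f) = 0 := by
    rw [hR, ← aeval_transpose_aux, vecMul_transpose, aeval_map_matrix_aux σ hσ,
      mulVec_map_sigma_aux, hafu]
    funext i
    simp
  calc (fun i => σ (u i)) ⬝ᵥ (β *ᵥ v)
      = (fun i => σ (u i)) ⬝ᵥ (aeval R (a * f) *ᵥ (β *ᵥ v)) := by
        rw [mulVec_mulVec, ← hβp, ← mulVec_mulVec, hv1]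
    _ = ((fun i => σ (u i)) ᵥ* aeval R (a * f)) ⬝ᵥ (β *ᵥ v) :=
        dotProduct_mulVec _ _ _
    _ = 0 := by rw [hz, zero_dotProduct]
end

section
/- Let q be an odd prime power and let F_{q²} be the finite field with q² elements, with involution σ(a) = a^q. If f ∈ F_{q²}[x] is a monic irreducible polynomial with f(0) ≠ 0 that is self-U-reciprocal (f̃ = f), then the degree of f is odd. -/
open Polynomial

/-- Ennola's lemma: a monic irreducible self-U-reciprocal polynomial over the field with
`q²` elements (`q` an odd prime power), with involution `σ(a) = a^q`, has odd degree. -/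
theorem odd_degree_of_selfUreciprocal_irreducible (q : ℕ) (hq : Odd q) (hpp : IsPrimePow q)
    (F : Type*) [Field F] [Fintype F] (hF : Fintype.card F = q ^ 2)
    (σ : F →+* F) (hσ : ∀ a : F, σ a = a ^ q)
    (f : Polynomial F) (hmonic : f.Monic) (hirr : Irreducible f) (hf0 : f.coeff 0 ≠ 0)
    (hself : C (σ (f.coeff 0))⁻¹ * (f.map σ).reverse = f) :
    Odd f.natDegree := by
  classical
  set d := f.natDegree with hd
  have hd1 : 0 < d := hirr.natDegree_pos
  have hq1 : 1 < q := hpp.two_le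
  obtain ⟨p, k, hpP, hk, hqpk⟩ := hpp
  have hp : p.Prime := hpP.nat_prime
  haveI : Fact p.Prime := ⟨hp⟩
  have hcharF : CharP F p := by
    obtain ⟨p', hcp'⟩ := CharP.exists F
    haveI := hcp'
    obtain ⟨n, hp', hcard'⟩ := FiniteField.card F p'
    have h1 : p ∣ p' ^ (n : ℕ) := by
      rw [← hcard', hF, ← hqpk, ← pow_mul]
      exact dvd_pow_self p (by positivity)
    have h2 : p = p' := (Nat.prime_dvd_prime_iff_eq hp hp').mp (hp.dvd_of_dvd_pow h1)
    rwa [h2]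
  haveI := hcharF
  haveI : Fact (Irreducible f) := ⟨hirr⟩
  set K := AdjoinRoot f with hK
  have hfne : f ≠ 0 := hmonic.ne_zero
  haveI : CharP K p := charP_of_injective_algebraMap (algebraMap F K).injective p
  haveI : ExpChar K p := ExpChar.prime hp
  haveI : Module.Finite F K := (AdjoinRoot.powerBasis hfne).finite
  haveI : Finite K := Module.finite_of_finite F
  haveI : Fintype K := Fintype.ofFinite K
  have hfinrank : Module.finrank F K = d := by
    rw [(AdjoinRoot.powerBasis hfne).finrank, AdjoinRoot.powerBasis_dim]
  have hcardK : Fintype.card K = q ^ (2 * d) := by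
    rw [Module.card_eq_pow_finrank (K := F) (V := K), hF, hfinrank, ← pow_mul]
  set α : K := AdjoinRoot.root f with hα
  have hroot : (Polynomial.aeval α) f = 0 := by
    rw [AdjoinRoot.aeval_eq]; exact AdjoinRoot.mk_self
  have hα0 : α ≠ 0 := by
    intro h
    have h2 := hroot
    rw [h, aeval_def, eval₂_at_zero] at h2
    exact hf0 ((map_eq_zero_iff _ (algebraMap F K).injective).mp h2)
  -- exponents
  have hq2m : ∀ m : ℕ, q ^ (2 * m) = p ^ (k * (2 * m)) := by
    intro m; rw [← hqpk, ← pow_mul]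
  -- the (2m)-fold q-Frobenius fixes the base field pointwise
  have hfixF : ∀ m : ℕ,
      (iterateFrobenius K p (k * (2 * m))).comp (algebraMap F K) = algebraMap F K := by
    intro m
    ext a
    simp only [RingHom.comp_apply, iterateFrobenius_def]
    rw [← map_pow]
    congr 1
    calc a ^ p ^ (k * (2 * m)) = a ^ Fintype.card F ^ m := by
          rw [hF, ← hq2m, ← pow_mul]
      _ = a := FiniteField.pow_card_pow m a
  -- roots map to roots under x ↦ x ^ q ^ (2m)
  have hWr : ∀ (m : ℕ) (x : K), aeval x f = 0 → aeval (x ^ q ^ (2 * m)) f = 0 := by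
    intro m x hx
    have e2 : iterateFrobenius K p (k * (2 * m)) x = x ^ q ^ (2 * m) := by
      rw [iterateFrobenius_def, hq2m]
    have h := hom_eval₂ f (algebraMap F K) (iterateFrobenius K p (k * (2 * m))) x
    rw [hfixF m, e2] at h
    rw [aeval_def] at hx ⊢
    rw [← h, hx, map_zero]
  -- α^q is a root of f.map σ
  have hsig : aeval (α ^ q) (f.map σ) = 0 := by
    have e1 : (iterateFrobenius K p k).comp (algebraMap F K) = (algebraMap F K).comp σ := by
      ext a
      simp only [RingHom.comp_apply, iterateFrobenius_def]
      rw [← map_pow, hqpk, hσ]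
    have e2 : iterateFrobenius K p k α = α ^ q := by rw [iterateFrobenius_def, hqpk]
    have h := hom_eval₂ f (algebraMap F K) (iterateFrobenius K p k) α
    rw [e1, e2] at h
    rw [aeval_def] at hroot
    rw [hroot, map_zero] at h
    rw [aeval_def, eval₂_map]
    exact h.symm
  -- (α^q)⁻¹ is a root of f
  have hβ : aeval ((α ^ q)⁻¹) f = 0 := by
    haveI : Invertible (α ^ q) := invertibleOfNonzero (pow_ne_zero _ hα0)
    have h2 : eval₂ (algebraMap F K) (⅟(α ^ q)) (reverse (f.map σ)) = 0 := by
      rw [eval₂_reverse_eq_zero_iff, ← aeval_def]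
      exact hsig
    rw [invOf_eq_inv] at h2
    have h3 : aeval ((α ^ q)⁻¹) f
        = aeval ((α ^ q)⁻¹) (C (σ (f.coeff 0))⁻¹ * (f.map σ).reverse) := by rw [hself]
    rw [map_mul, aeval_C] at h3
    rw [h3, aeval_def, h2, mul_zero]
  -- basic power identities
  have hiter : ∀ (x : K) (a b : ℕ), (x ^ q ^ a) ^ q ^ b = x ^ q ^ (a + b) := by
    intro x a b; rw [← pow_mul, ← pow_add]
  have hqd : ∀ x : K, x ^ q ^ (2 * d) = x := by
    intro x
    calc x ^ q ^ (2 * d) = x ^ Fintype.card K := by rw [hcardK]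
      _ = x := FiniteField.pow_card x
  -- key: α is not fixed by smaller Frobenius powers
  have hb : ∀ r : ℕ, 0 < r → r < d → α ^ q ^ (2 * r) ≠ α := by
    intro r hr0 hrd heq
    have hall : ∀ x : K, x ^ q ^ (2 * r) = x := by
      intro x
      obtain ⟨g, rfl⟩ := AdjoinRoot.mk_surjective x
      rw [← AdjoinRoot.aeval_eq]
      have h := hom_eval₂ g (algebraMap F K) (iterateFrobenius K p (k * (2 * r))) α
      have e2 : iterateFrobenius K p (k * (2 * r)) α = α := by
        rw [iterateFrobenius_def, ← hq2m r]; exact heq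
      rw [hfixF r, e2] at h
      rw [aeval_def, hq2m r, ← iterateFrobenius_def]
      exact h
    set N := q ^ (2 * r) with hN
    have hN1 : 1 < N := Nat.one_lt_pow (by positivity) hq1
    have hpoly : (X ^ N - X : K[X]) ≠ 0 := FiniteField.X_pow_card_sub_X_ne_zero K hN1
    have hcount : Fintype.card K ≤ (X ^ N - X : K[X]).natDegree := by
      have hsub : Finset.univ ⊆ ((X ^ N - X : K[X]).roots.toFinset) := by
        intro x _
        rw [Multiset.mem_toFinset, mem_roots hpoly]
        simp [IsRoot, sub_eq_zero, hall x]
      calc Fintype.card K = Finset.univ.card := (Finset.card_univ).symm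
        _ ≤ ((X ^ N - X : K[X]).roots.toFinset).card := Finset.card_le_card hsub
        _ ≤ Multiset.card (X ^ N - X : K[X]).roots := Multiset.toFinset_card_le _
        _ ≤ _ := card_roots' _
    rw [FiniteField.X_pow_card_sub_X_natDegree_eq K hN1, hcardK] at hcount
    exact absurd hcount (not_le.mpr (Nat.pow_lt_pow_right hq1 (by omega)))
  -- distinctness of the conjugates
  have haux : ∀ i i', i < i' → i' < d → α ^ q ^ (2 * i) ≠ α ^ q ^ (2 * i') := by
    intro i i' hii hi'd heq
    have h1 : (α ^ q ^ (2 * i)) ^ q ^ (2 * (d - i')) = (α ^ q ^ (2 * i')) ^ q ^ (2 * (d - i')) := by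
      rw [heq]
    rw [hiter, hiter] at h1
    have e2 : 2 * i' + 2 * (d - i') = 2 * d := by omega
    rw [e2, hqd] at h1
    have e3 : 2 * i + 2 * (d - i') = 2 * (i + (d - i')) := by omega
    rw [e3] at h1
    exact hb (i + (d - i')) (by omega) (by omega) h1
  -- the multiples of d
  have horbit : ∀ s : ℕ, α ^ q ^ (2 * (d * s)) = α := by
    intro s
    induction s with
    | zero => simp
    | succ s ih =>
      have e : 2 * (d * (s + 1)) = 2 * (d * s) + 2 * d := by ring
      rw [e, ← hiter, ih, hqd]
  have hdvd_of_fix : ∀ m : ℕ, α ^ q ^ (2 * m) = α → d ∣ m := by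
    intro m hm
    have h1 : α ^ q ^ (2 * (m % d)) = α := by
      have h2 := hiter α (2 * (d * (m / d))) (2 * (m % d))
      rw [horbit (m / d)] at h2
      have e : 2 * (d * (m / d)) + 2 * (m % d) = 2 * m := by
        have := Nat.div_add_mod m d
        omega
      rw [e] at h2
      rw [h2, hm]
    rcases Nat.eq_zero_or_pos (m % d) with h0 | hpos
    · exact Nat.dvd_of_mod_eq_zero h0
    · exact absurd h1 (hb _ hpos (Nat.mod_lt _ hd1))
  -- the set of roots of f in K is exactly the Frobenius orbit of α
  set g : K[X] := f.map (algebraMap F K) with hg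
  have hgne : g ≠ 0 := (Polynomial.map_ne_zero_iff (algebraMap F K).injective).mpr hfne
  have hgdeg : g.natDegree = d := natDegree_map (algebraMap F K)
  have hmemroots : ∀ x : K, aeval x f = 0 → x ∈ g.roots.toFinset := by
    intro x hx
    rw [Multiset.mem_toFinset, mem_roots hgne, IsRoot.def, hg, eval_map, ← aeval_def]
    exact hx
  set img := (Finset.range d).image (fun i => α ^ q ^ (2 * i)) with himg
  have hsub : img ⊆ g.roots.toFinset := by
    intro x hx
    simp only [himg, Finset.mem_image] at hx
    obtain ⟨i, hi, rfl⟩ := hx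
    exact hmemroots _ (hWr i α hroot)
  have hcards : d ≤ img.card := by
    rw [himg, Finset.card_image_of_injOn, Finset.card_range]
    intro i hi i' hi' h
    simp only [Finset.coe_range, Set.mem_Iio] at hi hi'
    by_contra hne
    rcases Nat.lt_or_gt_of_ne hne with hlt | hlt
    · exact haux i i' hlt hi' h
    · exact haux i' i hlt hi h.symm
  have hcardle : (g.roots.toFinset).card ≤ d :=
    le_trans (Multiset.toFinset_card_le _) (by rw [← hgdeg]; exact card_roots' g)
  have heqset : img = g.roots.toFinset :=
    Finset.eq_of_subset_of_card_le hsub (le_trans hcardle hcards)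
  have hβmem : (α ^ q)⁻¹ ∈ img := by rw [heqset]; exact hmemroots _ hβ
  simp only [himg, Finset.mem_image, Finset.mem_range] at hβmem
  obtain ⟨j, hjd, hj⟩ := hβmem
  -- final arithmetic
  have h4j : α ^ q ^ (2 * j + 2 * j) = α ^ q ^ 2 := by
    have h1 : (α ^ q ^ (2 * j)) ^ q ^ (2 * j) = ((α ^ q)⁻¹) ^ q ^ (2 * j) := by rw [hj]
    rw [hiter] at h1
    have h2 : ((α ^ q)⁻¹) ^ q ^ (2 * j) = ((α ^ q ^ (2 * j)) ^ q)⁻¹ := by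
      rw [inv_pow]
      congr 1
      rw [← pow_mul, mul_comm, pow_mul]
    rw [h2, hj, inv_pow, inv_inv, ← pow_mul, ← pow_two] at h1
    exact h1
  have hfix : α ^ q ^ (2 * (2 * j + d - 1)) = α := by
    have h1 : (α ^ q ^ (2 * j + 2 * j)) ^ q ^ (2 * (d - 1))
        = (α ^ q ^ 2) ^ q ^ (2 * (d - 1)) := by rw [h4j]
    rw [hiter, hiter] at h1
    have e1 : 2 * j + 2 * j + 2 * (d - 1) = 2 * (2 * j + d - 1) := by omega
    have e2 : 2 + 2 * (d - 1) = 2 * d := by omega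
    rw [e1, e2] at h1
    rw [h1, hqd]
  have hdvd : d ∣ (2 * j + d - 1) := hdvd_of_fix _ hfix
  by_contra hcon
  rw [Nat.not_odd_iff_even] at hcon
  have h2d : 2 ∣ d := hcon.two_dvd
  have h2m : 2 ∣ (2 * j + d - 1) := dvd_trans h2d hdvd
  omega
end

section
/- Let k be an algebraically closed field and n ≥ 1. Consider the set S of semisimple (i.e., diagonalizable) elements of GL(n,k), with the equivalence relation on S given by z-equivalence in GL(n,k) (two elements of S are related iff their centralizers in GL(n,k) are conjugate by an element of GL(n,k)). Then the number of equivalence classes of S under this relation equals p(n), the number of partitions of n. -/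
/-!
If `h x h⁻¹ = diagonal d`, the centralizer of `x` is conjugate to the group of invertible
matrices that are block diagonal for the fibres of `d`, and two such block groups are conjugate
(by a permutation matrix) as soon as their multisets of block sizes agree. Conversely the block
sizes are an invariant of the conjugacy class of the centralizer: its commutant in the matrix
algebra consists of the diagonal matrices constant on the blocks, whose minimal nonzero
idempotents are the projections onto the blocks, of ranks the block sizes. Since `k` is
infinite, every partition of `n` occurs as a multiset of block sizes.
-/

open Matrix

/-- The z-classes in the ambient group `G` of elements of a subset `S ⊆ G`: two elements
of `S` are z-equivalent when their centralizers in `G` are conjugate by an element of `G`.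
`zQuotSub S` is the quotient of `S` by this relation. -/
def zQuotSub {G : Type*} [Group G] (S : Set G) : Type _ :=
  Quot (fun x y : S => ∃ g : G,
    {h : G | h * (y : G) = (y : G) * h}
      = (fun h => g * h * g⁻¹) '' {h : G | h * (x : G) = (x : G) * h})

open Function

namespace ZClass

section Fibers

variable {α β γ δ : Type*} [Fintype α] [Fintype β] [DecidableEq γ] [DecidableEq δ]

theorem exists_equiv_of_card_fiber_eq (f : α → γ) (g : β → δ) (e : γ ≃ δ)
    (h : ∀ c, Fintype.card {a // f a = c} = Fintype.card {b // g b = e c}) :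
    ∃ σ : α ≃ β, ∀ a, g (σ a) = e (f a) :=
  ⟨(Equiv.sigmaFiberEquiv f).symm.trans <|
      (Equiv.sigmaCongr e fun c => Fintype.equivOfCardEq (h c)).trans (Equiv.sigmaFiberEquiv g),
    fun a => (Fintype.equivOfCardEq (h (f a)) ⟨a, rfl⟩).2⟩

def fiberCards [Fintype γ] (q : α → γ) : Multiset ℕ :=
  Finset.univ.val.map fun c => Fintype.card {a // q a = c}

theorem count_map_univ {ε : Type*} [Fintype ε] (f : ε → ℕ) (r : ℕ) :
    (Finset.univ.val.map f).count r = Fintype.card {c // f c = r} := by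
  rw [Multiset.count_map, Fintype.card_subtype, Finset.card_def, Finset.filter_val]
  simp only [eq_comm]

theorem exists_equiv_of_fiberCards_eq [Fintype γ] [Fintype δ] {q : α → γ} {q' : β → δ}
    (h : fiberCards q = fiberCards q') :
    ∃ σ : α ≃ β, ∀ a b, q' (σ a) = q' (σ b) ↔ q a = q b := by
  obtain ⟨ε, hε⟩ := exists_equiv_of_card_fiber_eq (fun c => Fintype.card {a // q a = c})
    (fun c => Fintype.card {b // q' b = c}) (Equiv.refl ℕ) fun r => by
      rw [← count_map_univ, ← count_map_univ]
      exact congrArg (Multiset.count r) h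
  obtain ⟨σ, hσ⟩ := exists_equiv_of_card_fiber_eq q q' ε fun c => (hε c).symm
  exact ⟨σ, fun a b => by rw [hσ, hσ, ε.apply_eq_iff_eq]⟩

theorem sum_fiberCards [Fintype γ] (q : α → γ) : (fiberCards q).sum = Fintype.card α := by
  rw [fiberCards, ← Finset.sum_eq_multiset_sum, ← Fintype.card_sigma,
    Fintype.card_congr (Equiv.sigmaFiberEquiv q)]

theorem pos_of_mem_fiberCards [Fintype γ] {q : α → γ} (hq : Surjective q) {r : ℕ}
    (hr : r ∈ fiberCards q) : 0 < r := by
  obtain ⟨c, -, rfl⟩ := Multiset.mem_map.1 hr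
  obtain ⟨a, rfl⟩ := hq c
  exact Fintype.card_pos_iff.2 ⟨⟨a, rfl⟩⟩

theorem exists_surjective_fiberCards_eq {n : ℕ} (P : n.Partition) :
    ∃ (m : ℕ) (q : Fin n → Fin m), Surjective q ∧ fiberCards q = P.parts := by
  obtain ⟨c, rfl⟩ := Nat.Partition.ofComposition_surj P
  let e := c.blocksFinEquiv
  refine ⟨c.length, fun i => (e.symm i).1, fun j => ⟨e ⟨j, ⟨0, c.one_le_blocksFun j⟩⟩, by simp⟩, ?_⟩
  have hcard (j : Fin c.length) : Fintype.card {i // (e.symm i).1 = j} = c.blocksFun j := by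
    rw [Fintype.card_congr ((e.symm.subtypeEquiv fun _ => Iff.rfl).trans (Equiv.sigmaSubtype j)),
      Fintype.card_fin]
  simp only [fiberCards, hcard, Fin.univ_val_map, Composition.ofFn_blocksFun,
    Nat.Partition.ofComposition_parts]

end Fibers

section Centralizers

theorem setOf_mul_eq_mul_eq_centralizer {G : Type*} [Group G] (y : G) :
    {h : G | h * y = y * h} = Set.centralizer {y} :=
  Set.ext fun _ => Subgroup.mem_centralizer_singleton_iff.symm

theorem centralizer_image_mulEquiv {M N : Type*} [Mul M] [Mul N] (φ : M ≃* N) (S : Set M) :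
    Set.centralizer (φ '' S) = φ '' Set.centralizer S := by
  ext x
  obtain ⟨y, rfl⟩ := φ.surjective x
  simp [Set.mem_centralizer_iff, φ.injective.mem_set_image, ← map_mul, φ.injective.eq_iff]

end Centralizers

section Idempotents

variable {M N : Type*}

def minIdempotents [MulZeroClass M] (A : Set M) : Set M :=
  {e | e ∈ A ∧ IsIdempotentElem e ∧ e ≠ 0 ∧
    ∀ f ∈ A, IsIdempotentElem f → f * e = f → f ≠ 0 → f = e}

theorem minIdempotents_image [MulZeroClass M] [MulZeroClass N] {F : Type*} [FunLike F M N]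
    [MulHomClass F M N] [ZeroHomClass F M N] (φ : F) (hφ : Injective φ) (A : Set M) :
    minIdempotents (φ '' A) = φ '' minIdempotents A := by
  have key (a : M) : φ a ∈ minIdempotents (φ '' A) ↔ a ∈ minIdempotents A := by
    simp only [minIdempotents, Set.mem_ofPred_eq, hφ.mem_set_image, Set.forall_mem_image,
      IsIdempotentElem, ← map_mul, hφ.eq_iff, map_ne_zero_iff φ hφ]
  ext e
  constructor
  · intro he
    obtain ⟨a, -, rfl⟩ := he.1
    exact ⟨a, (key a).1 he, rfl⟩
  · rintro ⟨a, ha, rfl⟩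
    exact (key a).2 ha

theorem minIdempotents_univ_pi {ι R : Type*} [DecidableEq ι] [MonoidWithZero R]
    [IsLeftCancelMulZero R] [Nontrivial R] :
    minIdempotents (Set.univ : Set (ι → R)) = Set.range fun i => (Pi.single i 1 : ι → R) := by
  have idem_single (i : ι) : IsIdempotentElem (Pi.single i 1 : ι → R) := by
    rw [IsIdempotentElem, ← Pi.single_mul, one_mul]
  have idem_apply {e : ι → R} (he : IsIdempotentElem e) (i : ι) : e i = 0 ∨ e i = 1 :=
    IsIdempotentElem.iff_eq_zero_or_one.1 (congrFun he i)
  ext e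
  constructor
  · rintro ⟨-, he, he0, hmin⟩
    obtain ⟨i, hi⟩ := Function.ne_iff.1 he0
    refine ⟨i, hmin _ trivial (idem_single i) ?_ (by simp)⟩
    ext j
    by_cases hj : j = i
    · subst hj
      simp [(idem_apply he j).resolve_left hi]
    · simp [hj]
  · rintro ⟨i, rfl⟩
    refine ⟨trivial, idem_single i, by simp, fun f _ hf hfi hf0 => ?_⟩
    have hoff (j : ι) (hj : j ≠ i) : f j = 0 := by
      simpa [hj] using (congrFun hfi j).symm
    obtain ⟨j, hj⟩ := Function.ne_iff.1 hf0
    obtain rfl : j = i := by_contra fun h => hj (hoff j h)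
    ext l
    by_cases hl : l = j
    · subst hl
      simpa using (idem_apply hf l).resolve_left hj
    · simp [hl, hoff l hl]

end Idempotents

section Ranks

variable {ι k : Type*} [Fintype ι] [CommRing k]

open Classical in
noncomputable def rankMultiset (s : Set (Matrix ι ι k)) : Multiset ℕ :=
  if h : s.Finite then h.toFinset.val.map rank else 0

theorem rankMultiset_image {φ : Matrix ι ι k → Matrix ι ι k} (hφ : Injective φ)
    (hrank : ∀ M, (φ M).rank = M.rank) (s : Set (Matrix ι ι k)) :
    rankMultiset (φ '' s) = rankMultiset s := by
  classical
  by_cases hs : s.Finite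
  · rw [rankMultiset, rankMultiset, dif_pos (hs.image φ), dif_pos hs,
      Set.Finite.toFinset_image φ hs, Finset.image_val_of_injOn hφ.injOn, Multiset.map_map]
    exact Multiset.map_congr rfl fun M _ => hrank M
  · rw [rankMultiset, rankMultiset, dif_neg (by rwa [Set.finite_image_iff hφ.injOn]),
      dif_neg hs]

theorem rankMultiset_range {γ : Type*} [Fintype γ] {e : γ → Matrix ι ι k} (he : Injective e) :
    rankMultiset (Set.range e) = Finset.univ.val.map fun c => (e c).rank := by
  classical
  rw [rankMultiset, dif_pos (Set.finite_range e), Set.Finite.toFinset_range,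
    Finset.image_val_of_injOn he.injOn, Multiset.map_map]
  rfl

variable [DecidableEq ι]

theorem rank_units_conj (g : (Matrix ι ι k)ˣ) (M : Matrix ι ι k) :
    ((g : Matrix ι ι k) * M * (g⁻¹ : (Matrix ι ι k)ˣ)).rank = M.rank := by
  rw [rank_mul_eq_left_of_isUnit_det _ _ (isUnits_det_units g⁻¹),
    rank_mul_eq_right_of_isUnit_det _ _ (isUnits_det_units g)]

noncomputable def commutantRanks (X : Set (Matrix ι ι k)ˣ) : Multiset ℕ :=
  rankMultiset (minIdempotents (Set.centralizer (((↑) : _ → Matrix ι ι k) '' X)))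

theorem commutantRanks_conj (g : (Matrix ι ι k)ˣ) (X : Set (Matrix ι ι k)ˣ) :
    commutantRanks (MulAut.conj g '' X) = commutantRanks X := by
  let φ := MulDistribMulAction.toMulEquiv (Matrix ι ι k) (ConjAct.toConjAct g)
  have hφ (M : Matrix ι ι k) : φ M = (g : Matrix ι ι k) * M * (g⁻¹ : (Matrix ι ι k)ˣ) :=
    ConjAct.units_smul_def _ M
  have himage : ((↑) '' (MulAut.conj g '' X) : Set (Matrix ι ι k)) = φ '' ((↑) '' X) := by
    simp only [Set.image_image, hφ, MulAut.conj_apply, Units.val_mul]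
  rw [commutantRanks, commutantRanks, himage, centralizer_image_mulEquiv,
    minIdempotents_image φ φ.injective, rankMultiset_image φ.injective]
  intro M
  rw [hφ, rank_units_conj]

end Ranks

section Blocks

variable {ι k γ : Type*} [Fintype ι] [DecidableEq ι] [Field k]

variable (k) in
def blockUnits (q : ι → γ) : Set (Matrix ι ι k)ˣ :=
  {h | ∀ a b, q a ≠ q b → (h : Matrix ι ι k) a b = 0}

theorem blockUnits_comp {δ : Type*} {v : γ → δ} (hv : Injective v) (q : ι → γ) :
    blockUnits k (v ∘ q) = blockUnits k q := by
  simp only [blockUnits, Function.comp_apply, hv.ne_iff]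

theorem centralizer_eq_blockUnits {u : (Matrix ι ι k)ˣ} {d : ι → k}
    (hu : (u : Matrix ι ι k) = diagonal d) : Set.centralizer {u} = blockUnits k d := by
  ext h
  simp only [Set.mem_centralizer_iff, Set.mem_singleton_iff, forall_eq]
  rw [Units.ext_iff, Units.val_mul, Units.val_mul, hu, ← Matrix.ext_iff]
  simp only [diagonal_mul, mul_diagonal]
  refine forall₂_congr fun a b => ⟨fun hab hne => ?_, fun hab => ?_⟩
  · have : (d a - d b) * (h : Matrix ι ι k) a b = 0 := by linear_combination hab
    exact (mul_eq_zero.1 this).resolve_left (sub_ne_zero.2 hne)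
  · by_cases hd : d a = d b
    · rw [hd, mul_comm]
    · simp [hab hd]

variable {q : ι → γ} {M : Matrix ι ι k}

theorem apply_eq_zero_of_mem_centralizer_blockUnits [Infinite k]
    (hM : M ∈ Set.centralizer (((↑) : _ → Matrix ι ι k) '' blockUnits k q)) {a b : ι}
    (hab : a ≠ b) : M a b = 0 := by
  classical
  obtain ⟨t, ht⟩ := Infinite.exists_notMem_finset ({0, 1} : Finset k)
  have hunit : IsUnit (diagonal (update 1 a t)) := by
    refine isUnit_diagonal.2 (Pi.isUnit_iff.2 fun i => ?_)
    by_cases hi : i = a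
    · subst hi
      simpa using fun h => ht (by simp [h])
    · simp [hi]
  have h := congrFun₂ (hM _ ⟨hunit.unit, fun i j hij => by
    simp [diagonal_apply_ne _ (ne_of_apply_ne q hij)], rfl⟩) a b
  simp only [IsUnit.unit_spec, diagonal_mul, mul_diagonal, update_self,
    update_of_ne hab.symm, Pi.one_apply, mul_one] at h
  have : (t - 1) * M a b = 0 := by linear_combination h
  exact (mul_eq_zero.1 this).resolve_left (sub_ne_zero.2 fun h => ht (by simp [h]))

theorem factorsThrough_of_mem_centralizer_blockUnits
    (hM : M ∈ Set.centralizer (((↑) : _ → Matrix ι ι k) '' blockUnits k q)) :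
    FactorsThrough (fun i => M i i) q := by
  intro a b hq
  rcases eq_or_ne a b with rfl | hab
  · rfl
  have hunit : IsUnit (transvection a b (1 : k)) := by
    rw [isUnit_iff_isUnit_det, det_transvection_of_ne a b hab]
    exact isUnit_one
  have h := congrFun₂ (hM _ ⟨hunit.unit, fun i j hij => by
    rw [IsUnit.unit_spec, transvection, Matrix.add_apply, one_apply_ne (ne_of_apply_ne q hij),
      zero_add, single_apply_of_ne]
    rintro ⟨rfl, rfl⟩
    exact hij hq, rfl⟩) a b
  simp only [IsUnit.unit_spec, transvection_mul_apply_same, mul_transvection_apply_same,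
    one_mul] at h
  simpa using h.symm

theorem centralizer_blockUnits [Infinite k] (q : ι → γ) :
    Set.centralizer (((↑) : _ → Matrix ι ι k) '' blockUnits k q) =
      Set.range fun f : γ → k => diagonal (f ∘ q) := by
  ext M
  constructor
  · intro hM
    refine ⟨extend q (fun i => M i i) 0, ?_⟩
    ext a b
    rcases eq_or_ne a b with rfl | hab
    · simp [(factorsThrough_of_mem_centralizer_blockUnits hM).extend_apply]
    · simp [hab, apply_eq_zero_of_mem_centralizer_blockUnits hM hab]
  · rintro ⟨f, rfl⟩ _ ⟨h, hh, rfl⟩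
    ext a b
    rw [mul_diagonal, diagonal_mul]
    by_cases hab : q a = q b
    · simp [hab, mul_comm]
    · simp [hh a b hab]

theorem minIdempotents_range_diagonal_comp [DecidableEq γ] (hq : Surjective q) :
    minIdempotents (Set.range fun f : γ → k => diagonal (f ∘ q)) =
      Set.range fun c => diagonal ((Pi.single c 1 : γ → k) ∘ q) := by
  let φ : (γ → k) →+* Matrix ι ι k :=
    (diagonalRingHom ι k).comp (RingHom.pi fun i => Pi.evalRingHom _ (q i))
  have hφ : Injective φ := fun f g h => hq.injective_comp_right (diagonal_injective h)
  rw [show (fun f : γ → k => diagonal (f ∘ q)) = φ from rfl, ← Set.image_univ,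
    minIdempotents_image φ hφ, minIdempotents_univ_pi, ← Set.range_comp]
  rfl

theorem commutantRanks_blockUnits [Infinite k] [Fintype γ] [DecidableEq γ] (hq : Surjective q) :
    commutantRanks (blockUnits k q) = fiberCards q := by
  classical
  have hinj : Injective fun c => diagonal ((Pi.single c 1 : γ → k) ∘ q) := fun c c' h => by
    simpa [Pi.single_apply] using congrFun (hq.injective_comp_right (diagonal_injective h)) c
  rw [commutantRanks, centralizer_blockUnits, minIdempotents_range_diagonal_comp hq,
    rankMultiset_range hinj]
  refine Multiset.map_congr rfl fun c _ => ?_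
  rw [rank_diagonal]
  exact Fintype.card_congr (Equiv.subtypeEquivRight fun i => by simp [Pi.single_apply])

theorem blockUnits_eq_conj_of_fiberCards_eq {δ : Type*} [Fintype γ] [DecidableEq γ] [Fintype δ]
    [DecidableEq δ] {q' : ι → δ} (h : fiberCards q = fiberCards q') :
    ∃ P : (Matrix ι ι k)ˣ, blockUnits k q' = MulAut.conj P '' blockUnits k q := by
  obtain ⟨σ, hσ⟩ := exists_equiv_of_fiberCards_eq h
  let P : (Matrix ι ι k)ˣ := permMatrixHom.toHomUnits σ
  have hconj (g : (Matrix ι ι k)ˣ) :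
      ((P⁻¹ * g * P : (Matrix ι ι k)ˣ) : Matrix ι ι k) = (g : Matrix ι ι k).submatrix σ σ := by
    simp only [P, ← map_inv, Units.val_mul, MonoidHom.coe_toHomUnits, permMatrixHom_apply, inv_inv,
      Equiv.Perm.permMatrix, PEquiv.toMatrix_toPEquiv_mul, PEquiv.mul_toMatrix_toPEquiv,
      submatrix_submatrix]
    rfl
  have hmem (g : (Matrix ι ι k)ˣ) : g ∈ blockUnits k q' ↔ P⁻¹ * g * P ∈ blockUnits k q := by
    refine ⟨fun hg a b hab => ?_, fun hg a b hab => ?_⟩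
    · rw [hconj]
      exact hg _ _ (by rwa [Ne, hσ])
    · simpa [hconj] using hg (σ.symm a) (σ.symm b) (by
        rwa [Ne, ← hσ, σ.apply_symm_apply, σ.apply_symm_apply])
  refine ⟨P, Set.ext fun g => ⟨fun hg => ⟨_, (hmem g).1 hg, by simp [mul_assoc]⟩, ?_⟩⟩
  rintro ⟨g, hg, rfl⟩
  rw [hmem]
  simpa [mul_assoc] using hg

end Blocks

section Semisimple

variable {ι k : Type*} [Fintype ι] [DecidableEq ι] [Field k]

theorem centralizer_eq_conj_blockUnits {x h : (Matrix ι ι k)ˣ} {d : ι → k}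
    (hx : ((h * x * h⁻¹ : (Matrix ι ι k)ˣ) : Matrix ι ι k) = diagonal d) :
    Set.centralizer {x} = MulAut.conj h⁻¹ '' blockUnits k (Set.rangeFactorization d) := by
  rw [← blockUnits_comp Subtype.val_injective, Set.rangeFactorization_eq,
    ← centralizer_eq_blockUnits hx, ← centralizer_image_mulEquiv, Set.image_singleton]
  simp [mul_assoc]

theorem commutantRanks_centralizer [Infinite k] [DecidableEq k] {x h : (Matrix ι ι k)ˣ}
    {d : ι → k} (hx : ((h * x * h⁻¹ : (Matrix ι ι k)ˣ) : Matrix ι ι k) = diagonal d) :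
    commutantRanks (Set.centralizer {x}) = fiberCards (Set.rangeFactorization d) := by
  rw [centralizer_eq_conj_blockUnits hx, commutantRanks_conj,
    commutantRanks_blockUnits Set.rangeFactorization_surjective]

theorem exists_conj_centralizer_eq [Infinite k] {x y a b : (Matrix ι ι k)ˣ} {d d' : ι → k}
    (hx : ((a * x * a⁻¹ : (Matrix ι ι k)ˣ) : Matrix ι ι k) = diagonal d)
    (hy : ((b * y * b⁻¹ : (Matrix ι ι k)ˣ) : Matrix ι ι k) = diagonal d')
    (h : commutantRanks (Set.centralizer {x}) = commutantRanks (Set.centralizer {y})) :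
    ∃ g, Set.centralizer {y} = MulAut.conj g '' Set.centralizer {x} := by
  classical
  rw [commutantRanks_centralizer hx, commutantRanks_centralizer hy] at h
  obtain ⟨P, hP⟩ := blockUnits_eq_conj_of_fiberCards_eq (k := k) h
  refine ⟨b⁻¹ * P * a, ?_⟩
  rw [centralizer_eq_conj_blockUnits hx, centralizer_eq_conj_blockUnits hy, hP, Set.image_image,
    Set.image_image]
  congr 1
  ext g
  simp [mul_assoc]

theorem exists_partition_parts_eq_commutantRanks [Infinite k] {n : ℕ}
    {x : (Matrix (Fin n) (Fin n) k)ˣ} (hx : ∃ (h : (Matrix (Fin n) (Fin n) k)ˣ) (d : Fin n → k),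
      ((h * x * h⁻¹ : (Matrix (Fin n) (Fin n) k)ˣ) : Matrix (Fin n) (Fin n) k) = diagonal d) :
    ∃ P : n.Partition, P.parts = commutantRanks (Set.centralizer {x}) := by
  classical
  obtain ⟨h, d, hd⟩ := hx
  rw [commutantRanks_centralizer hd]
  exact ⟨⟨fiberCards (Set.rangeFactorization d),
    pos_of_mem_fiberCards Set.rangeFactorization_surjective,
    (sum_fiberCards _).trans (Fintype.card_fin n)⟩, rfl⟩

theorem exists_diagonal_commutantRanks_eq [Infinite k] {n : ℕ} (P : n.Partition) :
    ∃ (u : (Matrix (Fin n) (Fin n) k)ˣ) (d : Fin n → k),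
      (u : Matrix (Fin n) (Fin n) k) = diagonal d ∧
        commutantRanks (Set.centralizer {u}) = P.parts := by
  obtain ⟨m, q, hq, hqP⟩ := exists_surjective_fiberCards_eq P
  have : Infinite ({0}ᶜ : Set k) := (Set.finite_singleton 0).infinite_compl.to_subtype
  let v : Fin m ↪ ({0}ᶜ : Set k) := Fin.valEmbedding.trans (Infinite.natEmbedding _)
  have hunit : IsUnit (diagonal fun i => (v (q i) : k)) :=
    isUnit_diagonal.2 (Pi.isUnit_iff.2 fun i => Ne.isUnit (v (q i)).2)
  refine ⟨hunit.unit, _, hunit.unit_spec, ?_⟩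
  rw [centralizer_eq_blockUnits hunit.unit_spec]
  change commutantRanks (blockUnits k ((Subtype.val ∘ v) ∘ q)) = P.parts
  rw [blockUnits_comp (Subtype.val_injective.comp v.injective), commutantRanks_blockUnits hq, hqP]

end Semisimple

end ZClass

open ZClass

theorem card_zClasses_semisimple_GL_general (k : Type*) [Field k] [IsAlgClosed k]
    (n : ℕ) :
    Nat.card (zQuotSub {g : Matrix.GeneralLinearGroup (Fin n) k |
        ∃ (h : Matrix.GeneralLinearGroup (Fin n) k) (d : Fin n → k),
          ((h * g * h⁻¹ : Matrix.GeneralLinearGroup (Fin n) k) :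
              Matrix (Fin n) (Fin n) k) = Matrix.diagonal d})
      = Fintype.card (Nat.Partition n) := by
  set S : Set (Matrix (Fin n) (Fin n) k)ˣ := {g | ∃ h d, _}
  have hparts (x : S) := (exists_partition_parts_eq_commutantRanks x.2).choose_spec
  let F : zQuotSub S → n.Partition := Quot.lift
    (fun x => (exists_partition_parts_eq_commutantRanks x.2).choose)
    fun x y ⟨g, hg⟩ => by
      rw [setOf_mul_eq_mul_eq_centralizer, setOf_mul_eq_mul_eq_centralizer] at hg
      refine Nat.Partition.ext ?_
      rw [hparts, hparts, hg]
      exact (commutantRanks_conj g _).symm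
  have hinj : Injective F := by
    rintro ⟨x⟩ ⟨y⟩ hxy
    obtain ⟨a, d, hx⟩ := x.2
    obtain ⟨b, d', hy⟩ := y.2
    obtain ⟨g, hg⟩ := exists_conj_centralizer_eq hx hy <|
      (hparts x).symm.trans ((congrArg Nat.Partition.parts hxy).trans (hparts y))
    refine Quot.sound ⟨g, ?_⟩
    rwa [setOf_mul_eq_mul_eq_centralizer, setOf_mul_eq_mul_eq_centralizer]
  have hsurj : Surjective F := fun P => by
    obtain ⟨u, d, hu, hP⟩ := exists_diagonal_commutantRanks_eq (k := k) P
    exact ⟨Quot.mk _ ⟨u, 1, d, by simpa using hu⟩, Nat.Partition.ext ((hparts _).trans hP)⟩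
  rw [Nat.card_eq_of_bijective F ⟨hinj, hsurj⟩, Nat.card_eq_fintype_card]

/-- Over an algebraically closed field, the number of z-classes of semisimple
(diagonalizable) elements of `GL(n, k)` is `p(n)`, the number of partitions of `n`. -/
theorem card_zClasses_semisimple_GL (k : Type*) [Field k] [IsAlgClosed k]
    (n : ℕ) (hn : 1 ≤ n) :
    Nat.card (zQuotSub {g : Matrix.GeneralLinearGroup (Fin n) k |
        ∃ (h : Matrix.GeneralLinearGroup (Fin n) k) (d : Fin n → k),
          ((h * g * h⁻¹ : Matrix.GeneralLinearGroup (Fin n) k) :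
              Matrix (Fin n) (Fin n) k) = Matrix.diagonal d})
      = Fintype.card (Nat.Partition n) :=
  card_zClasses_semisimple_GL_general k n
end
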